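/- arXiv:1707.07253 — 9 statements merged into one kernel-verified Lean document; each statement's English description precedes it below -/
import Mathlib

section
/- Suppose f, g, h : ℤ × ℝ → ℂ are differentiable in the time variable t, f(n,t) ≠ 0 for all (n,t), and f, g, h satisfy the bilinear system: (i) i(∂_t g(n,t)·f(n,t) − g(n,t)·∂_t f(n,t)) = g(n+1,t)f(n−1,t) + g(n−1,t)f(n+1,t) − 2g(n,t)f(n,t); (ii) i(∂_t f(n,t)·h(n,t) − f(n,t)·∂_t h(n,t)) = f(n+1,t)h(n−1,t) + f(n−1,t)h(n+1,t) − 2f(n,t)h(n,t); (iii) f(n,t)² − f(n−1,t)f(n+1,t) = g(n,t)h(n,t). Then Q(n,t) := g(n,t)/f(n,t) and R(n,t) := h(n,t)/f(n,t) satisfy the coupled Ablowitz–Ladik system: i∂_t Q(n,t) = Q(n+1,t) + Q(n−1,t) − 2Q(n,t) − Q(n,t)R(n,t)(Q(n+1,t) + Q(n−1,t)) and i∂_t R(n,t) = −(R(n+1,t) + R(n−1,t) − 2R(n,t)) + Q(n,t)R(n,t)(R(n+1,t) + R(n−1,t)). -/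
/-- If `f, g, h : ℤ × ℝ → ℂ` are differentiable in `t`, `f` is nowhere zero,
and `f, g, h` satisfy the bilinear system (i)-(iii), then `Q = g/f` and `R = h/f`
satisfy the coupled Ablowitz–Ladik system. -/
theorem bilinear_to_AL
    (f g h : ℤ → ℝ → ℂ)
    (hfd : ∀ (n : ℤ) (t : ℝ), DifferentiableAt ℝ (f n) t)
    (hgd : ∀ (n : ℤ) (t : ℝ), DifferentiableAt ℝ (g n) t)
    (hhd : ∀ (n : ℤ) (t : ℝ), DifferentiableAt ℝ (h n) t)
    (hfne : ∀ (n : ℤ) (t : ℝ), f n t ≠ 0)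
    (e1 : ∀ (n : ℤ) (t : ℝ),
      Complex.I * (deriv (g n) t * f n t - g n t * deriv (f n) t) =
        g (n+1) t * f (n-1) t + g (n-1) t * f (n+1) t - 2 * g n t * f n t)
    (e2 : ∀ (n : ℤ) (t : ℝ),
      Complex.I * (deriv (f n) t * h n t - f n t * deriv (h n) t) =
        f (n+1) t * h (n-1) t + f (n-1) t * h (n+1) t - 2 * f n t * h n t)
    (e3 : ∀ (n : ℤ) (t : ℝ),
      (f n t) ^ 2 - f (n-1) t * f (n+1) t = g n t * h n t)
    (Q R : ℤ → ℝ → ℂ)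
    (hQ : ∀ (n : ℤ) (t : ℝ), Q n t = g n t / f n t)
    (hR : ∀ (n : ℤ) (t : ℝ), R n t = h n t / f n t) :
    ∀ (n : ℤ) (t : ℝ),
      (Complex.I * deriv (Q n) t =
        Q (n+1) t + Q (n-1) t - 2 * Q n t
          - Q n t * R n t * (Q (n+1) t + Q (n-1) t)) ∧
      (Complex.I * deriv (R n) t =
        -(R (n+1) t + R (n-1) t - 2 * R n t)
          + Q n t * R n t * (R (n+1) t + R (n-1) t)) := by
  intro n t
  have hQf : Q n = fun s => g n s / f n s := funext fun s => hQ n s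
  have hRf : R n = fun s => h n s / f n s := funext fun s => hR n s
  have dQ : deriv (Q n) t
      = (deriv (g n) t * f n t - g n t * deriv (f n) t) / (f n t) ^ 2 := by
    rw [hQf]; exact deriv_div (hgd n t) (hfd n t) (hfne n t)
  have dR : deriv (R n) t
      = (deriv (h n) t * f n t - h n t * deriv (f n) t) / (f n t) ^ 2 := by
    rw [hRf]; exact deriv_div (hhd n t) (hfd n t) (hfne n t)
  have h1 := e1 n t
  have h2 := e2 n t
  have h3 := e3 n t
  have hne := hfne n t
  have hnep := hfne (n+1) t
  have hnem := hfne (n-1) t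
  constructor
  · rw [dQ]; simp only [hQ, hR]
    field_simp
    linear_combination (f (n+1) t * f (n-1) t) * h1 - (g (n+1) t * f (n-1) t + g (n-1) t * f (n+1) t) * h3
  · rw [dR]; simp only [hQ, hR]
    field_simp
    linear_combination (-(f (n+1) t * f (n-1) t)) * h2 + (h (n+1) t * f (n-1) t + h (n-1) t * f (n+1) t) * h3
end

section
/- Let N ≥ 2 be a natural number, let M be an N × (N−2) complex matrix, and let a, b, c, d ∈ ℂ^N be column vectors. Writing [M, x, y] for the N × N matrix obtained by appending the columns x and y to M, one has det[M,a,b]·det[M,c,d] − det[M,a,c]·det[M,b,d] + det[M,a,d]·det[M,b,c] = 0. -/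
/-- The `N × N` matrix `[M, x, y]` whose first `N-2` columns are those of `M`
and whose last two columns are `x` and `y`. -/
def appendTwoCols {N : ℕ} (M : Matrix (Fin N) (Fin (N - 2)) ℂ)
    (x y : Fin N → ℂ) : Matrix (Fin N) (Fin N) ℂ :=
  Matrix.of fun i j =>
    if h : (j : ℕ) < N - 2 then M i ⟨j, h⟩
    else if (j : ℕ) = N - 2 then x i else y i

namespace PlueckerAux

open Matrix Submodule Module

variable {N : ℕ}

/-- The columns of `M`, as vectors. -/
def cols (M : Matrix (Fin N) (Fin (N - 2)) ℂ) : Fin (N - 2) → (Fin N → ℂ) :=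
  fun k i => M i k

/-- The transpose of `appendTwoCols M x y` (rows are the columns). -/
def R (M : Matrix (Fin N) (Fin (N - 2)) ℂ) (x y : Fin N → ℂ) :
    Matrix (Fin N) (Fin N) ℂ :=
  Matrix.of fun j i =>
    if h : (j : ℕ) < N - 2 then M i ⟨j, h⟩
    else if (j : ℕ) = N - 2 then x i else y i

noncomputable def F (M : Matrix (Fin N) (Fin (N - 2)) ℂ) (x y : Fin N → ℂ) : ℂ :=
  (R M x y).det

lemma det_append (M : Matrix (Fin N) (Fin (N - 2)) ℂ) (x y : Fin N → ℂ) :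
    (appendTwoCols M x y).det = F M x y := by
  have h : appendTwoCols M x y = (R M x y)ᵀ := rfl
  rw [h, Matrix.det_transpose, F]

lemma updateRow_comm (A : Matrix (Fin N) (Fin N) ℂ) {i j : Fin N} (h : i ≠ j)
    (r s : Fin N → ℂ) :
    (A.updateRow i r).updateRow j s = (A.updateRow j s).updateRow i r := by
  ext k l
  by_cases hk : k = j <;> by_cases hk' : k = i <;>
    simp_all [Matrix.updateRow_apply]

lemma R_rep (hN : 2 ≤ N) (M : Matrix (Fin N) (Fin (N - 2)) ℂ) (x y : Fin N → ℂ) :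
    R M x y = ((R M 0 0).updateRow ⟨N - 2, by omega⟩ x).updateRow ⟨N - 1, by omega⟩ y := by
  ext j i
  have hj := j.isLt
  simp only [R, Matrix.updateRow_apply, Matrix.of_apply, Fin.ext_iff]
  rcases Nat.lt_trichotomy (j : ℕ) (N - 2) with h | h | h
  · rw [dif_pos h, if_neg (by omega), if_neg (by omega), dif_pos h]
  · rw [dif_neg (by omega), if_pos h, if_neg (by omega), if_pos h]
  · rw [dif_neg (by omega), if_neg (by omega), if_pos (by omega)]

lemma ne12 (hN : 2 ≤ N) :
    (⟨N - 2, by omega⟩ : Fin N) ≠ ⟨N - 1, by omega⟩ := by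
  simp only [ne_eq, Fin.mk.injEq]
  omega

lemma F_add_right (hN : 2 ≤ N) (M : Matrix (Fin N) (Fin (N - 2)) ℂ)
    (x y y' : Fin N → ℂ) : F M x (y + y') = F M x y + F M x y' := by
  rw [F, F, F, R_rep hN M x (y + y'), R_rep hN M x y, R_rep hN M x y',
    Matrix.det_updateRow_add]

lemma F_smul_right (hN : 2 ≤ N) (M : Matrix (Fin N) (Fin (N - 2)) ℂ)
    (c : ℂ) (x y : Fin N → ℂ) : F M x (c • y) = c * F M x y := by
  rw [F, F, R_rep hN M x (c • y), R_rep hN M x y, Matrix.det_updateRow_smul]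

lemma F_add_left (hN : 2 ≤ N) (M : Matrix (Fin N) (Fin (N - 2)) ℂ)
    (x x' y : Fin N → ℂ) : F M (x + x') y = F M x y + F M x' y := by
  rw [F, F, F, R_rep hN M (x + x') y, R_rep hN M x y, R_rep hN M x' y,
    updateRow_comm _ (ne12 hN), updateRow_comm _ (ne12 hN), updateRow_comm _ (ne12 hN),
    Matrix.det_updateRow_add]

lemma F_smul_left (hN : 2 ≤ N) (M : Matrix (Fin N) (Fin (N - 2)) ℂ)
    (c : ℂ) (x y : Fin N → ℂ) : F M (c • x) y = c * F M x y := by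
  rw [F, F, R_rep hN M (c • x) y, R_rep hN M x y,
    updateRow_comm _ (ne12 hN), updateRow_comm _ (ne12 hN),
    Matrix.det_updateRow_smul]

lemma F_self (hN : 2 ≤ N) (M : Matrix (Fin N) (Fin (N - 2)) ℂ) (x : Fin N → ℂ) :
    F M x x = 0 := by
  refine Matrix.det_zero_of_row_eq (ne12 hN) ?_
  funext i
  simp only [R, Matrix.of_apply]
  rw [dif_neg (by omega), dif_neg (by omega), if_neg (show ¬(N - 1 = N - 2) by omega)]
  simp

lemma F_left_col (hN : 2 ≤ N) (M : Matrix (Fin N) (Fin (N - 2)) ℂ)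
    (k : Fin (N - 2)) (y : Fin N → ℂ) : F M (cols M k) y = 0 := by
  have hk : (k : ℕ) < N := by have := k.isLt; omega
  refine Matrix.det_zero_of_row_eq (i := ⟨k, hk⟩) (j := ⟨N - 2, by omega⟩)
    (by simp only [ne_eq, Fin.mk.injEq]; have := k.isLt; omega) ?_
  funext i
  simp only [R, Matrix.of_apply]
  rw [dif_pos k.isLt, dif_neg (by omega)]
  simp [cols]

lemma F_zero_left (hN : 2 ≤ N) (M : Matrix (Fin N) (Fin (N - 2)) ℂ) (y : Fin N → ℂ) :
    F M 0 y = 0 := by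
  have h : (0 : Fin N → ℂ) = (0 : ℂ) • (0 : Fin N → ℂ) := by simp
  rw [h, F_smul_left hN, zero_mul]

/-- The span of the columns of `M`. -/
noncomputable def W (M : Matrix (Fin N) (Fin (N - 2)) ℂ) : Submodule ℂ (Fin N → ℂ) :=
  Submodule.span ℂ (Set.range (cols M))

lemma F_left_span (hN : 2 ≤ N) (M : Matrix (Fin N) (Fin (N - 2)) ℂ)
    {w : Fin N → ℂ} (hw : w ∈ W M) (y : Fin N → ℂ) : F M w y = 0 := by
  induction hw using Submodule.span_induction with
  | mem x hx => obtain ⟨k, rfl⟩ := hx; exact F_left_col hN M k y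
  | zero => exact F_zero_left hN M y
  | add u v _ _ hu hv => rw [F_add_left hN, hu, hv, add_zero]
  | smul c u _ hu => rw [F_smul_left hN, hu, mul_zero]

lemma F_swap (hN : 2 ≤ N) (M : Matrix (Fin N) (Fin (N - 2)) ℂ) (x y : Fin N → ℂ) :
    F M x y = - F M y x := by
  have h := F_self hN M (x + y)
  rw [F_add_left hN, F_add_right hN, F_add_right hN, F_self hN, F_self hN] at h
  linear_combination h

lemma F_right_span (hN : 2 ≤ N) (M : Matrix (Fin N) (Fin (N - 2)) ℂ)
    {w : Fin N → ℂ} (hw : w ∈ W M) (y : Fin N → ℂ) : F M y w = 0 := by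
  rw [F_swap hN, F_left_span hN M hw, neg_zero]

/-- The family of the columns of `M` together with the vector `a`. -/
def vfam (M : Matrix (Fin N) (Fin (N - 2)) ℂ) (a : Fin N → ℂ) :
    Fin (N - 2) ⊕ Unit → (Fin N → ℂ) :=
  Sum.elim (cols M) (fun _ => a)

lemma F_of_dep (hN : 2 ≤ N) (M : Matrix (Fin N) (Fin (N - 2)) ℂ) (a : Fin N → ℂ)
    (hdep : ¬ LinearIndependent ℂ (vfam M a)) (x : Fin N → ℂ) : F M a x = 0 := by
  by_contra hF
  apply hdep
  have hunit : IsUnit (R M a x) := by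
    rw [Matrix.isUnit_iff_isUnit_det]
    exact Ne.isUnit hF
  have hrows : LinearIndependent ℂ (fun i => R M a x i) :=
    Matrix.linearIndependent_rows_iff_isUnit.mpr hunit
  have hinj : Function.Injective
      (fun s : Fin (N - 2) ⊕ Unit =>
        (Sum.elim (fun k : Fin (N - 2) => (⟨(k : ℕ), by have := k.isLt; omega⟩ : Fin N))
          (fun _ => (⟨N - 2, by omega⟩ : Fin N)) s)) := by
    intro s t hst
    cases s with
    | inl k =>
      cases t with
      | inl l =>
        simp only [Sum.elim_inl, Fin.mk.injEq] at hst
        exact congrArg Sum.inl (Fin.ext hst)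
      | inr u =>
        simp only [Sum.elim_inl, Sum.elim_inr, Fin.mk.injEq] at hst
        exact absurd hst (by have := k.isLt; omega)
    | inr u =>
      cases t with
      | inl l =>
        simp only [Sum.elim_inl, Sum.elim_inr, Fin.mk.injEq] at hst
        exact absurd hst (by have := l.isLt; omega)
      | inr v => rfl
  have hcomp := hrows.comp _ hinj
  have heq : vfam M a = (fun i => R M a x i) ∘
      (fun s : Fin (N - 2) ⊕ Unit =>
        (Sum.elim (fun k : Fin (N - 2) => (⟨(k : ℕ), by have := k.isLt; omega⟩ : Fin N))
          (fun _ => (⟨N - 2, by omega⟩ : Fin N)) s)) := by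
    funext s
    cases s with
    | inl k =>
      funext i
      simp only [vfam, Sum.elim_inl, Function.comp_apply, R, Matrix.of_apply]
      rw [dif_pos k.isLt]
      simp [cols]
    | inr u =>
      funext i
      simp only [vfam, Sum.elim_inr, Function.comp_apply, R, Matrix.of_apply]
      rw [dif_neg (by omega)]
      simp
  rw [heq]
  exact hcomp

/-- The span of the columns of `M` together with `a`. -/
noncomputable def U (M : Matrix (Fin N) (Fin (N - 2)) ℂ) (a : Fin N → ℂ) :
    Submodule ℂ (Fin N → ℂ) :=
  Submodule.span ℂ (Set.range (vfam M a))

lemma U_eq (M : Matrix (Fin N) (Fin (N - 2)) ℂ) (a : Fin N → ℂ) :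
    U M a = W M ⊔ (ℂ ∙ a) := by
  rw [U, vfam, Set.Sum.elim_range, Submodule.span_union]
  congr 1
  rw [Set.range_const]

lemma mem_U (M : Matrix (Fin N) (Fin (N - 2)) ℂ) (a : Fin N → ℂ) {b : Fin N → ℂ}
    (hb : b ∈ U M a) : ∃ w ∈ W M, ∃ μ : ℂ, b = w + μ • a := by
  rw [U_eq] at hb
  obtain ⟨w, hw, z, hz, hwz⟩ := Submodule.mem_sup.mp hb
  obtain ⟨μ, hμ⟩ := Submodule.mem_span_singleton.mp hz
  exact ⟨w, hw, μ, by rw [← hwz, ← hμ]⟩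

end PlueckerAux

open PlueckerAux in
/-- the Plücker-type determinant identity
`|M,a,b||M,c,d| − |M,a,c||M,b,d| + |M,a,d||M,b,c| = 0`. -/
theorem pluecker_identity (N : ℕ) (hN : 2 ≤ N)
    (M : Matrix (Fin N) (Fin (N - 2)) ℂ) (a b c d : Fin N → ℂ) :
    (appendTwoCols M a b).det * (appendTwoCols M c d).det
      - (appendTwoCols M a c).det * (appendTwoCols M b d).det
      + (appendTwoCols M a d).det * (appendTwoCols M b c).det = 0 := by
  simp only [det_append]
  by_cases hdep : LinearIndependent ℂ (vfam M a)
  · -- the columns of `M` together with `a` are linearly independent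
    by_cases hb : b ∈ U M a
    · obtain ⟨w, hw, μ, rfl⟩ := mem_U M a hb
      rw [F_add_right hN, F_smul_right hN, F_right_span hN M hw, F_self hN,
        F_add_left hN, F_add_left hN, F_smul_left hN, F_smul_left hN,
        F_left_span hN M hw, F_left_span hN M hw]
      ring
    · -- `b ∉ U`, so `U ⊔ ℂ∙b = ⊤` and `c` decomposes
      have hUfin : Module.finrank ℂ (U M a) = N - 1 := by
        rw [U, finrank_span_eq_card hdep]
        simp only [Fintype.card_sum, Fintype.card_fin, Fintype.card_unit]
        omega
      have hlt : U M a < U M a ⊔ (ℂ ∙ b) := by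
        refine lt_of_le_of_ne le_sup_left (fun h => hb ?_)
        rw [h]
        exact Submodule.mem_sup_right (Submodule.mem_span_singleton_self b)
      have h2 : N - 1 < Module.finrank ℂ ↥(U M a ⊔ (ℂ ∙ b)) := by
        rw [← hUfin]
        exact Submodule.finrank_lt_finrank_of_lt hlt
      have h3 : Module.finrank ℂ ↥(U M a ⊔ (ℂ ∙ b)) ≤ N := by
        have := Submodule.finrank_le (U M a ⊔ (ℂ ∙ b))
        rwa [Module.finrank_fin_fun] at this
      have htop : U M a ⊔ (ℂ ∙ b) = ⊤ := by
        apply Submodule.eq_top_of_finrank_eq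
        rw [Module.finrank_fin_fun]
        omega
      have hc : c ∈ U M a ⊔ (ℂ ∙ b) := htop ▸ Submodule.mem_top
      obtain ⟨p, hp, z, hz, hpz⟩ := Submodule.mem_sup.mp hc
      obtain ⟨γ, hγ⟩ := Submodule.mem_span_singleton.mp hz
      obtain ⟨w, hw, μ, rfl⟩ := mem_U M a hp
      have hcdec : c = w + μ • a + γ • b := by rw [← hpz, ← hγ]
      subst hcdec
      rw [F_add_right hN, F_add_right hN, F_smul_right hN, F_smul_right hN,
        F_right_span hN M hw, F_self hN,
        F_add_left hN, F_add_left hN, F_smul_left hN, F_smul_left hN,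
        F_left_span hN M hw,
        F_add_right hN (M := M) (x := b), F_add_right hN (M := M) (x := b),
        F_smul_right hN, F_smul_right hN, F_right_span hN M hw, F_self hN,
        F_swap hN M b a]
      ring
  · -- dependent case: every `F M a x` vanishes
    rw [F_of_dep hN M a hdep, F_of_dep hN M a hdep, F_of_dep hN M a hdep]
    ring
end

section
/- Let m, p ≥ 0, N = m+p+2, let A be an invertible N × N complex matrix, and let Φ, Ψ : ℤ × ℝ → ℂ^N satisfy Φ(n+1,t) = A·Φ(n,t) and Ψ(n−1,t) = A·Ψ(n,t). Define f(n,t) = Cas^(m+1,p+1)(Φ,Ψ)(n,t), g(n,t) = Cas^(m+2,p)(Φ,Ψ)(n,t), and h(n,t) = −Cas^(m,p+2)(Φ,Ψ)(n,t). Then f(n,t)² − f(n−1,t)f(n+1,t) = g(n,t)h(n,t) for all (n,t). -/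
set_option maxHeartbeats 8000000


/-- The double Casoratian `Cas^(a, N-a)(Φ,Ψ)(n,t)`: the determinant of the `N × N`
matrix whose first `a` columns are `Φ(n,t), Φ(n+2,t), …, Φ(n+2(a-1),t)` and whose
remaining columns are `Ψ(n,t), Ψ(n+2,t), …`. -/
noncomputable def doubleCasoratian {N : ℕ} (a : ℕ)
    (Φ Ψ : ℤ → ℝ → Fin N → ℂ) (n : ℤ) (t : ℝ) : ℂ :=
  Matrix.det (Matrix.of fun i j : Fin N =>
    if (j : ℕ) < a then Φ (n + 2 * ((j : ℕ) : ℤ)) t i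
    else Ψ (n + 2 * (((j : ℕ) - a : ℕ) : ℤ)) t i)

namespace CasAux

open Matrix

noncomputable def colDet {M : ℕ} (w : Fin M → Fin M → ℂ) : ℂ :=
  Matrix.det (Matrix.of w)

lemma colDet_perm {M : ℕ} (w : Fin M → Fin M → ℂ) (σ : Equiv.Perm (Fin M)) :
    colDet (fun j => w (σ j)) = ((Equiv.Perm.sign σ : ℤ) : ℂ) * colDet w := by
  have := Matrix.det_permute σ (Matrix.of w)
  simpa [colDet, Matrix.submatrix] using this

lemma colDet_mulVec {M : ℕ} (A : Matrix (Fin M) (Fin M) ℂ) (w : Fin M → Fin M → ℂ) :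
    colDet (fun j => A.mulVec (w j)) = A.det * colDet w := by
  have hm : (Matrix.of (fun j => A.mulVec (w j)) : Matrix (Fin M) (Fin M) ℂ)
      = Matrix.of w * Aᵀ := by
    ext j i
    simp [Matrix.mul_apply, Matrix.mulVec, dotProduct, Matrix.transpose_apply, mul_comm]
  unfold colDet
  rw [hm, Matrix.det_mul, Matrix.det_transpose, mul_comm]

lemma colDet_mulVec2 {M : ℕ} (A : Matrix (Fin M) (Fin M) ℂ) (w : Fin M → Fin M → ℂ) :
    colDet (fun j => A.mulVec (A.mulVec (w j))) = A.det * (A.det * colDet w) := by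
  rw [← colDet_mulVec A w]
  exact colDet_mulVec A (fun j => A.mulVec (w j))

lemma alt_sum {M : ℕ} (w : Fin (M+1) → Fin M → ℂ) (r : Fin M) :
    ∑ i : Fin (M+1), (-1:ℂ)^(i:ℕ) * colDet (w ∘ i.succAbove) * w i r = 0 := by
  classical
  set Mx : Matrix (Fin (M+1)) (Fin (M+1)) ℂ :=
    Matrix.of (Fin.cons (fun j => w j r) (fun k j => w j k)) with hMx
  have h0 : Mx.det = 0 := by
    apply Matrix.det_zero_of_row_eq (Ne.symm (Fin.succ_ne_zero r))
    funext j
    simp [hMx]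
  rw [Matrix.det_succ_row_zero] at h0
  rw [← h0]
  apply Finset.sum_congr rfl
  intro j _
  have h2 : colDet (w ∘ j.succAbove) = (Mx.submatrix Fin.succ j.succAbove).det := by
    unfold colDet
    rw [← Matrix.det_transpose (Mx.submatrix Fin.succ j.succAbove)]
    congr 1
  have h1 : Mx 0 j = w j r := by simp [hMx]
  rw [h2, h1]
  ring

noncomputable def Dfun {K : ℕ} (Y : ℕ → Fin (K+2) → ℂ) (x y : Fin (K+2) → ℂ) : ℂ :=
  colDet (fun j : Fin (K+2) => if (j:ℕ) < K then Y (j:ℕ) else if (j:ℕ) = K then x else y)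

lemma succAbove_val {n : ℕ} (i : Fin (n+1)) (l : Fin n) :
    ((i.succAbove l : Fin (n+1)) : ℕ) = if (l:ℕ) < (i:ℕ) then (l:ℕ) else (l:ℕ)+1 := by
  rcases lt_or_ge ((l:ℕ)) ((i:ℕ)) with hlt | hge
  · rw [Fin.succAbove_of_castSucc_lt i l (by rw [Fin.lt_def]; simpa using hlt)]
    simp [hlt]
  · rw [Fin.succAbove_of_le_castSucc i l (by rw [Fin.le_def]; simpa using hge)]
    simp [Fin.val_succ, Nat.not_lt.mpr hge]

lemma Dfun_zero_dup {K : ℕ} (Y : ℕ → Fin (K+2) → ℂ) (d : Fin (K+2) → ℂ) (i : ℕ) (hi : i < K) :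
    Dfun Y (Y i) d = 0 := by
  unfold Dfun colDet
  apply Matrix.det_zero_of_row_eq (i := (⟨i, by omega⟩ : Fin (K+2))) (j := ⟨K, by omega⟩)
  · intro hc
    have := congrArg Fin.val hc
    simp [Fin.val_mk] at this
    omega
  · funext l
    simp [Fin.val_mk, hi]

lemma Dfun_zero_row {K : ℕ} (Y : ℕ → Fin (K+2) → ℂ) (d : Fin (K+2) → ℂ) :
    Dfun Y 0 d = 0 := by
  unfold Dfun colDet
  apply Matrix.det_eq_zero_of_row_eq_zero (i := (⟨K, by omega⟩ : Fin (K+2)))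
  intro l
  simp [Fin.val_mk]

lemma Dfun_matrix {K : ℕ} (Y : ℕ → Fin (K+2) → ℂ) (x y : Fin (K+2) → ℂ) :
    (Matrix.of (fun j : Fin (K+2) => if (j:ℕ) < K then Y (j:ℕ) else if (j:ℕ) = K then x else y))
      = Matrix.updateRow
          (Matrix.of (fun j : Fin (K+2) =>
            if (j:ℕ) < K then Y (j:ℕ) else if (j:ℕ) = K then (0 : Fin (K+2) → ℂ) else y))
          ⟨K, by omega⟩ x := by
  ext j i
  rcases eq_or_ne j (⟨K, by omega⟩ : Fin (K+2)) with hj | hj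
  · subst hj
    simp [Matrix.updateRow_self, Fin.val_mk]
  · rw [Matrix.updateRow_ne hj]
    have hne : (j:ℕ) ≠ K := by
      intro hc; exact hj (Fin.ext (by simp [Fin.val_mk, hc]))
    simp only [Matrix.of_apply]
    by_cases hlt : (j:ℕ) < K
    · simp [hlt]
    · simp [hlt, hne]

lemma Dfun_sum {K : ℕ} (Y : ℕ → Fin (K+2) → ℂ) (d : Fin (K+2) → ℂ)
    (c : Fin (K+3) → ℂ) (v : Fin (K+3) → Fin (K+2) → ℂ) :
    Dfun Y (∑ i, c i • v i) d = ∑ i, c i * Dfun Y (v i) d := by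
  classical
  set B : Matrix (Fin (K+2)) (Fin (K+2)) ℂ :=
    Matrix.of (fun j : Fin (K+2) =>
      if (j:ℕ) < K then Y (j:ℕ) else if (j:ℕ) = K then (0 : Fin (K+2) → ℂ) else d) with hB
  let L : (Fin (K+2) → ℂ) →ₗ[ℂ] ℂ :=
    { toFun := fun x => (B.updateRow ⟨K, by omega⟩ x).det
      map_add' := fun u v => Matrix.det_updateRow_add _ _ _ _
      map_smul' := fun s u => Matrix.det_updateRow_smul _ _ _ _ }
  have hLx : ∀ x, Dfun Y x d = L x := by
    intro x
    show colDet _ = _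
    unfold colDet
    rw [Dfun_matrix Y x d]
    rfl
  rw [hLx, map_sum]
  apply Finset.sum_congr rfl
  intro i _
  rw [_root_.map_smul, smul_eq_mul, hLx]

theorem pluecker {K : ℕ} (Y : ℕ → Fin (K+2) → ℂ) (a b c d : Fin (K+2) → ℂ) :
    Dfun Y a b * Dfun Y c d - Dfun Y a c * Dfun Y b d + Dfun Y a d * Dfun Y b c = 0 := by
  classical
  set w : Fin (K+3) → Fin (K+2) → ℂ := fun i =>
    if (i:ℕ) < K then Y (i:ℕ) else if (i:ℕ) = K then a else if (i:ℕ) = K+1 then b else c with hw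
  have hvec : (∑ i : Fin (K+3), ((-1:ℂ)^(i:ℕ) * colDet (w ∘ i.succAbove)) • w i) = 0 := by
    funext r
    rw [Finset.sum_apply]
    have := alt_sum w r
    simpa [Pi.smul_apply, smul_eq_mul, mul_assoc] using this
  have happ : ∑ i : Fin (K+3), ((-1:ℂ)^(i:ℕ) * colDet (w ∘ i.succAbove)) * Dfun Y (w i) d = 0 := by
    rw [← Dfun_sum Y d, hvec]
    exact Dfun_zero_row Y d
  have hwa : w ((Fin.last K).castSucc.castSucc) = a := by
    simp [hw]
  have hwb : w ((Fin.last (K+1)).castSucc) = b := by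
    simp [hw]
  have hwc : w (Fin.last (K+2)) = c := by
    simp [hw]
  have hC1 : colDet (w ∘ ((Fin.last K).castSucc.castSucc).succAbove) = Dfun Y b c := by
    unfold Dfun
    congr 1
    funext l
    have hl := l.isLt
    simp only [Function.comp_apply, hw]
    rw [succAbove_val]
    simp only [Fin.coe_castSucc, Fin.val_last]
    split_ifs <;> first | rfl | omega
  have hC2 : colDet (w ∘ ((Fin.last (K+1)).castSucc).succAbove) = Dfun Y a c := by
    unfold Dfun
    congr 1
    funext l
    have hl := l.isLt
    simp only [Function.comp_apply, hw]
    rw [succAbove_val]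
    simp only [Fin.coe_castSucc, Fin.val_last]
    split_ifs <;> first | rfl | omega
  have hC3 : colDet (w ∘ (Fin.last (K+2)).succAbove) = Dfun Y a b := by
    unfold Dfun
    congr 1
    funext l
    have hl := l.isLt
    simp only [Function.comp_apply, hw]
    rw [succAbove_val]
    simp only [Fin.val_last]
    split_ifs <;> first | rfl | omega
  simp only [Fin.sum_univ_castSucc] at happ
  rw [hwa, hwb, hwc, hC1, hC2, hC3] at happ
  simp only [Fin.coe_castSucc, Fin.val_last] at happ
  have hS0 : (∑ i : Fin K,
      ((-1:ℂ)^(i:ℕ) * colDet (w ∘ (((i.castSucc).castSucc).castSucc).succAbove)) *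
        Dfun Y (w (((i.castSucc).castSucc).castSucc)) d) = 0 := by
    apply Finset.sum_eq_zero
    intro i _
    have hwY : w (((i.castSucc).castSucc).castSucc) = Y (i:ℕ) := by
      simp [hw, i.isLt]
    rw [hwY, Dfun_zero_dup Y d _ i.isLt, mul_zero]
  rw [hS0] at happ
  have key : (-1:ℂ)^K *
      (Dfun Y a b * Dfun Y c d - Dfun Y a c * Dfun Y b d + Dfun Y a d * Dfun Y b c) = 0 := by
    linear_combination happ
  rcases mul_eq_zero.mp key with hc | hc
  · exact absurd hc (pow_ne_zero _ (by norm_num))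
  · exact hc

noncomputable def mv {M : ℕ} (q r : Fin (M+1)) : Equiv.Perm (Fin (M+1)) :=
  q.cycleRange⁻¹ * r.cycleRange

lemma mv_val {M : ℕ} (q r : Fin (M+1)) (hrq : r ≤ q) (j : Fin (M+1)) :
    ((mv q r j : Fin (M+1)) : ℕ) =
      if (j:ℕ) < (r:ℕ) then (j:ℕ)
      else if (j:ℕ) = (r:ℕ) then (q:ℕ)
      else if (j:ℕ) ≤ (q:ℕ) then (j:ℕ) - 1
      else (j:ℕ) := by
  have hq := q.isLt
  have hr := r.isLt
  have hj := j.isLt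
  have hrq' : (r:ℕ) ≤ (q:ℕ) := hrq
  unfold mv
  rw [Equiv.Perm.mul_apply]
  rcases Nat.lt_trichotomy ((j:ℕ)) ((r:ℕ)) with hlt | heq | hgt
  · have h1 : r.cycleRange j = j + 1 := Fin.cycleRange_of_lt (by rw [Fin.lt_def]; exact hlt)
    have h2 : q.cycleRange j = j + 1 := Fin.cycleRange_of_lt (by rw [Fin.lt_def]; omega)
    rw [h1, ← h2, Equiv.Perm.coe_inv, Equiv.symm_apply_apply]
    simp [hlt]
  · have hjr : j = r := Fin.ext heq
    have h1 : r.cycleRange j = 0 := Fin.cycleRange_of_eq hjr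
    have h2 : q.cycleRange q = 0 := Fin.cycleRange_self q
    rw [h1, ← h2, Equiv.Perm.coe_inv, Equiv.symm_apply_apply]
    simp [heq, Nat.lt_irrefl]
  · have h1 : r.cycleRange j = j := Fin.cycleRange_of_gt (by rw [Fin.lt_def]; exact hgt)
    rw [h1]
    rcases le_or_gt ((j:ℕ)) ((q:ℕ)) with hle | hqlt
    · have h2 : q.cycleRange ⟨(j:ℕ) - 1, by omega⟩ = j := by
        have hlt2 : (⟨(j:ℕ) - 1, by omega⟩ : Fin (M+1)) < q := by
          rw [Fin.lt_def]; simp only [Fin.val_mk]; omega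
        rw [Fin.cycleRange_of_lt hlt2]
        apply Fin.ext
        have hlast : (⟨(j:ℕ) - 1, by omega⟩ : Fin (M+1)) < Fin.last M := by
          rw [Fin.lt_def]; simp only [Fin.val_mk, Fin.val_last]; omega
        rw [Fin.val_add_one_of_lt hlast]
        simp only [Fin.val_mk]; omega
      have h3 : q.cycleRange⁻¹ j = ⟨(j:ℕ) - 1, by omega⟩ := by
        rw [Equiv.Perm.inv_eq_iff_eq]
        exact h2.symm
      rw [h3]
      simp only [Fin.val_mk]
      split_ifs <;> omega
    · have h2 : q.cycleRange j = j := Fin.cycleRange_of_gt (by rw [Fin.lt_def]; exact hqlt)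
      rw [← h2, Equiv.Perm.coe_inv, Equiv.symm_apply_apply]
      split_ifs <;> omega

lemma mv_sign {M : ℕ} (q r : Fin (M+1)) :
    ((Equiv.Perm.sign (mv q r) : ℤ) : ℂ) = (-1:ℂ)^((q:ℕ)+(r:ℕ)) := by
  unfold mv
  rw [_root_.map_mul, Equiv.Perm.sign_inv, Fin.sign_cycleRange, Fin.sign_cycleRange]
  push_cast
  rw [pow_add]

lemma dC_eq {N : ℕ} (a : ℕ) (Φ Ψ : ℤ → ℝ → Fin N → ℂ) (n : ℤ) (t : ℝ) :
    doubleCasoratian a Φ Ψ n t =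
      colDet (fun j : Fin N =>
        if (j:ℕ) < a then Φ (n + 2 * ((j:ℕ) : ℤ)) t
        else Ψ (n + 2 * (((j:ℕ) - a : ℕ) : ℤ)) t) := by
  unfold doubleCasoratian colDet
  rw [show (Matrix.of fun i j : Fin N =>
      if (j : ℕ) < a then Φ (n + 2 * ((j : ℕ) : ℤ)) t i
      else Ψ (n + 2 * (((j : ℕ) - a : ℕ) : ℤ)) t i)
    = (Matrix.of fun j : Fin N =>
        if (j:ℕ) < a then Φ (n + 2 * ((j:ℕ) : ℤ)) t
        else Ψ (n + 2 * (((j:ℕ) - a : ℕ) : ℤ)) t)ᵀ from ?_, Matrix.det_transpose]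
  ext i j
  simp [Matrix.transpose_apply, ite_apply]

lemma colDet_eq_D {K : ℕ} (Y : ℕ → Fin (K+2) → ℂ) (x y : Fin (K+2) → ℂ)
    (σ : Equiv.Perm (Fin (K+2))) (cX : Fin (K+2) → Fin (K+2) → ℂ)
    (hpt : ∀ j, cX j =
      if ((σ j : Fin (K+2)) : ℕ) < K then Y ((σ j : Fin (K+2)) : ℕ)
      else if ((σ j : Fin (K+2)) : ℕ) = K then x else y) :
    colDet cX = ((Equiv.Perm.sign σ : ℤ) : ℂ) * Dfun Y x y := by
  have hX : cX = fun j =>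
      (fun j' : Fin (K+2) =>
        if (j':ℕ) < K then Y (j':ℕ) else if (j':ℕ) = K then x else y) (σ j) := funext hpt
  rw [hX]
  exact colDet_perm (fun j' : Fin (K+2) =>
    if (j':ℕ) < K then Y (j':ℕ) else if (j':ℕ) = K then x else y) σ

end CasAux

/-- with `f = Cas^(m+1,p+1)`, `g = Cas^(m+2,p)`, `h = −Cas^(m,p+2)`,
the third bilinear equation `f² − f(n−1)f(n+1) = g·h` holds. -/
theorem casoratian_bilinear_three (m p : ℕ)
    (A : Matrix (Fin (m + p + 2)) (Fin (m + p + 2)) ℂ) (hA : IsUnit A)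
    (Φ Ψ : ℤ → ℝ → Fin (m + p + 2) → ℂ)
    (hΦA : ∀ (n : ℤ) (t : ℝ), Φ (n + 1) t = A.mulVec (Φ n t))
    (hΨA : ∀ (n : ℤ) (t : ℝ), Ψ (n - 1) t = A.mulVec (Ψ n t))
    (f g h : ℤ → ℝ → ℂ)
    (hf : ∀ (n : ℤ) (t : ℝ), f n t = doubleCasoratian (m + 1) Φ Ψ n t)
    (hg : ∀ (n : ℤ) (t : ℝ), g n t = doubleCasoratian (m + 2) Φ Ψ n t)
    (hh : ∀ (n : ℤ) (t : ℝ), h n t = -doubleCasoratian m Φ Ψ n t) :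
    ∀ (n : ℤ) (t : ℝ),
      (f n t) ^ 2 - f (n - 1) t * f (n + 1) t = g n t * h n t := by
  intro n t
  classical
  have hdet : A.det ≠ 0 := ((Matrix.isUnit_iff_isUnit_det A).mp hA).ne_zero
  have hPhiE : ∀ z z' : ℤ, z = z' → Φ z t = Φ z' t := fun z z' hz => by rw [hz]
  have hPsiE : ∀ z z' : ℤ, z = z' → Ψ z t = Ψ z' t := fun z z' hz => by rw [hz]
  set Yc : ℕ → Fin (m+p+2) → ℂ := fun k =>
    if k < m then Φ (n + (2*(k:ℤ)+2)) t else Ψ (n + 2*((k:ℤ) - (m:ℤ))) t with hYc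
  set va : Fin (m+p+2) → ℂ := Φ n t with hva
  set vb : Fin (m+p+2) → ℂ := Φ (n + (2*(m:ℤ)+2)) t with hvb
  set vc : Fin (m+p+2) → ℂ := Ψ (n - 2) t with hvc
  set vd : Fin (m+p+2) → ℂ := Ψ (n + 2*(p:ℤ)) t with hvd
  have hplk := CasAux.pluecker (K := m+p) Yc va vb vc vd
  -- the column functions of the relevant Casoratians
  have hcf : f n t = CasAux.colDet (fun j : Fin (m+p+2) =>
      if (j:ℕ) < m+1 then Φ (n + 2 * ((j:ℕ) : ℤ)) t
      else Ψ (n + 2 * (((j:ℕ) - (m+1) : ℕ) : ℤ)) t) :=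
    (hf n t).trans (CasAux.dC_eq (m+1) Φ Ψ n t)
  have hcfp : f (n+1) t = CasAux.colDet (fun j : Fin (m+p+2) =>
      if (j:ℕ) < m+1 then Φ (n+1 + 2 * ((j:ℕ) : ℤ)) t
      else Ψ (n+1 + 2 * (((j:ℕ) - (m+1) : ℕ) : ℤ)) t) :=
    (hf (n+1) t).trans (CasAux.dC_eq (m+1) Φ Ψ (n+1) t)
  have hcfm : f (n-1) t = CasAux.colDet (fun j : Fin (m+p+2) =>
      if (j:ℕ) < m+1 then Φ (n-1 + 2 * ((j:ℕ) : ℤ)) t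
      else Ψ (n-1 + 2 * (((j:ℕ) - (m+1) : ℕ) : ℤ)) t) :=
    (hf (n-1) t).trans (CasAux.dC_eq (m+1) Φ Ψ (n-1) t)
  have hcg : g n t = CasAux.colDet (fun j : Fin (m+p+2) =>
      if (j:ℕ) < m+2 then Φ (n + 2 * ((j:ℕ) : ℤ)) t
      else Ψ (n + 2 * (((j:ℕ) - (m+2) : ℕ) : ℤ)) t) :=
    (hg n t).trans (CasAux.dC_eq (m+2) Φ Ψ n t)
  have hch : CasAux.colDet (fun j : Fin (m+p+2) =>
      if (j:ℕ) < m then Φ (n + 2 * ((j:ℕ) : ℤ)) t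
      else Ψ (n + 2 * (((j:ℕ) - m : ℕ) : ℤ)) t) = - h n t := by
    rw [hh n t, CasAux.dC_eq m Φ Ψ n t]
    ring
  -- R1 : f(n)
  have R1 : CasAux.colDet (fun j : Fin (m+p+2) =>
      if (j:ℕ) < m+1 then Φ (n + 2 * ((j:ℕ) : ℤ)) t
      else Ψ (n + 2 * (((j:ℕ) - (m+1) : ℕ) : ℤ)) t)
    = ((Equiv.Perm.sign (CasAux.mv (⟨m+p, by omega⟩ : Fin (m+p+2)) ⟨0, by omega⟩) : ℤ) : ℂ)
      * CasAux.Dfun Yc va vd := by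
    apply CasAux.colDet_eq_D
    intro j
    have hjlt := j.isLt
    clear hplk hcf hcfp hcfm hcg hch hdet hA hf hg hh
    have hval := CasAux.mv_val (⟨m+p, by omega⟩ : Fin (m+p+2)) ⟨0, by omega⟩
        (Fin.mk_le_mk.mpr (by omega)) j
    simp only [Fin.val_mk] at hval
    simp only [hval, hYc, hva, hvd]
    split_ifs <;>
      first
        | omega
        | exact hPhiE _ _ (by omega)
        | exact hPsiE _ _ (by omega)
        | (rw [← hΦA, ← hΦA]; exact hPhiE _ _ (by omega))
        | (rw [← hΨA, ← hΨA]; exact hPsiE _ _ (by omega))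
        | (rw [← hΦA]; exact hPhiE _ _ (by omega))
        | (rw [← hΨA]; exact hPsiE _ _ (by omega))
        | contradiction
  -- R2 : A²·f(n)
  have R2 : CasAux.colDet (fun j : Fin (m+p+2) => A.mulVec (A.mulVec (
      if (j:ℕ) < m+1 then Φ (n + 2 * ((j:ℕ) : ℤ)) t
      else Ψ (n + 2 * (((j:ℕ) - (m+1) : ℕ) : ℤ)) t)))
    = ((Equiv.Perm.sign (CasAux.mv (⟨m+p, by omega⟩ : Fin (m+p+2)) ⟨m, by omega⟩
        * CasAux.mv (⟨m+p+1, by omega⟩ : Fin (m+p+2)) ⟨m+1, by omega⟩) : ℤ) : ℂ)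
      * CasAux.Dfun Yc vb vc := by
    apply CasAux.colDet_eq_D
    intro j
    have hjlt := j.isLt
    clear hplk hcf hcfp hcfm hcg hch hdet hA hf hg hh R1
    have hvin := CasAux.mv_val (⟨m+p+1, by omega⟩ : Fin (m+p+2)) ⟨m+1, by omega⟩
        (Fin.mk_le_mk.mpr (by omega)) j
    simp only [Fin.val_mk] at hvin
    have hval := CasAux.mv_val (⟨m+p, by omega⟩ : Fin (m+p+2)) ⟨m, by omega⟩
        (Fin.mk_le_mk.mpr (by omega))
        ((CasAux.mv (⟨m+p+1, by omega⟩ : Fin (m+p+2)) ⟨m+1, by omega⟩) j)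
    simp only [Fin.val_mk, hvin] at hval
    simp only [Equiv.Perm.mul_apply, hval, hYc, hvb, hvc]
    split_ifs <;>
      first
        | omega
        | exact hPhiE _ _ (by omega)
        | exact hPsiE _ _ (by omega)
        | (rw [← hΦA, ← hΦA]; exact hPhiE _ _ (by omega))
        | (rw [← hΨA, ← hΨA]; exact hPsiE _ _ (by omega))
        | (rw [← hΦA]; exact hPhiE _ _ (by omega))
        | (rw [← hΨA]; exact hPsiE _ _ (by omega))
        | contradiction
  -- R3 : A·f(n+1)
  have R3 : CasAux.colDet (fun j : Fin (m+p+2) => A.mulVec (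
      if (j:ℕ) < m+1 then Φ (n+1 + 2 * ((j:ℕ) : ℤ)) t
      else Ψ (n+1 + 2 * (((j:ℕ) - (m+1) : ℕ) : ℤ)) t))
    = ((Equiv.Perm.sign (CasAux.mv (⟨m+p, by omega⟩ : Fin (m+p+2)) ⟨m, by omega⟩) : ℤ) : ℂ)
      * CasAux.Dfun Yc vb vd := by
    apply CasAux.colDet_eq_D
    intro j
    have hjlt := j.isLt
    clear hplk hcf hcfp hcfm hcg hch hdet hA hf hg hh R1 R2
    have hval := CasAux.mv_val (⟨m+p, by omega⟩ : Fin (m+p+2)) ⟨m, by omega⟩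
        (Fin.mk_le_mk.mpr (by omega)) j
    simp only [Fin.val_mk] at hval
    simp only [hval, hYc, hvb, hvd]
    split_ifs <;>
      first
        | omega
        | exact hPhiE _ _ (by omega)
        | exact hPsiE _ _ (by omega)
        | (rw [← hΦA, ← hΦA]; exact hPhiE _ _ (by omega))
        | (rw [← hΨA, ← hΨA]; exact hPsiE _ _ (by omega))
        | (rw [← hΦA]; exact hPhiE _ _ (by omega))
        | (rw [← hΨA]; exact hPsiE _ _ (by omega))
        | contradiction
  -- R4 : A·f(n-1)
  have R4 : CasAux.colDet (fun j : Fin (m+p+2) => A.mulVec (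
      if (j:ℕ) < m+1 then Φ (n-1 + 2 * ((j:ℕ) : ℤ)) t
      else Ψ (n-1 + 2 * (((j:ℕ) - (m+1) : ℕ) : ℤ)) t))
    = ((Equiv.Perm.sign (CasAux.mv (⟨m+p, by omega⟩ : Fin (m+p+2)) ⟨0, by omega⟩
        * CasAux.mv (⟨m+p+1, by omega⟩ : Fin (m+p+2)) ⟨m+1, by omega⟩) : ℤ) : ℂ)
      * CasAux.Dfun Yc va vc := by
    apply CasAux.colDet_eq_D
    intro j
    have hjlt := j.isLt
    clear hplk hcf hcfp hcfm hcg hch hdet hA hf hg hh R1 R2 R3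
    have hvin := CasAux.mv_val (⟨m+p+1, by omega⟩ : Fin (m+p+2)) ⟨m+1, by omega⟩
        (Fin.mk_le_mk.mpr (by omega)) j
    simp only [Fin.val_mk] at hvin
    have hval := CasAux.mv_val (⟨m+p, by omega⟩ : Fin (m+p+2)) ⟨0, by omega⟩
        (Fin.mk_le_mk.mpr (by omega))
        ((CasAux.mv (⟨m+p+1, by omega⟩ : Fin (m+p+2)) ⟨m+1, by omega⟩) j)
    simp only [Fin.val_mk, hvin] at hval
    simp only [Equiv.Perm.mul_apply, hval, hYc, hva, hvc]
    split_ifs <;>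
      first
        | omega
        | exact hPhiE _ _ (by omega)
        | exact hPsiE _ _ (by omega)
        | (rw [← hΦA, ← hΦA]; exact hPhiE _ _ (by omega))
        | (rw [← hΨA, ← hΨA]; exact hPsiE _ _ (by omega))
        | (rw [← hΦA]; exact hPhiE _ _ (by omega))
        | (rw [← hΨA]; exact hPsiE _ _ (by omega))
        | contradiction
  -- R5 : g(n)
  have R5 : CasAux.colDet (fun j : Fin (m+p+2) =>
      if (j:ℕ) < m+2 then Φ (n + 2 * ((j:ℕ) : ℤ)) t
      else Ψ (n + 2 * (((j:ℕ) - (m+2) : ℕ) : ℤ)) t)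
    = ((Equiv.Perm.sign (CasAux.mv (⟨m+p, by omega⟩ : Fin (m+p+2)) ⟨0, by omega⟩
        * CasAux.mv (⟨m+p+1, by omega⟩ : Fin (m+p+2)) ⟨m+1, by omega⟩) : ℤ) : ℂ)
      * CasAux.Dfun Yc va vb := by
    apply CasAux.colDet_eq_D
    intro j
    have hjlt := j.isLt
    clear hplk hcf hcfp hcfm hcg hch hdet hA hf hg hh R1 R2 R3 R4
    have hvin := CasAux.mv_val (⟨m+p+1, by omega⟩ : Fin (m+p+2)) ⟨m+1, by omega⟩
        (Fin.mk_le_mk.mpr (by omega)) j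
    simp only [Fin.val_mk] at hvin
    have hval := CasAux.mv_val (⟨m+p, by omega⟩ : Fin (m+p+2)) ⟨0, by omega⟩
        (Fin.mk_le_mk.mpr (by omega))
        ((CasAux.mv (⟨m+p+1, by omega⟩ : Fin (m+p+2)) ⟨m+1, by omega⟩) j)
    simp only [Fin.val_mk, hvin] at hval
    simp only [Equiv.Perm.mul_apply, hval, hYc, hva, hvb]
    split_ifs <;>
      first
        | omega
        | exact hPhiE _ _ (by omega)
        | exact hPsiE _ _ (by omega)
        | (rw [← hΦA, ← hΦA]; exact hPhiE _ _ (by omega))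
        | (rw [← hΨA, ← hΨA]; exact hPsiE _ _ (by omega))
        | (rw [← hΦA]; exact hPhiE _ _ (by omega))
        | (rw [← hΨA]; exact hPsiE _ _ (by omega))
        | contradiction
  -- R6 : A²·(−h)(n)
  have R6 : CasAux.colDet (fun j : Fin (m+p+2) => A.mulVec (A.mulVec (
      if (j:ℕ) < m then Φ (n + 2 * ((j:ℕ) : ℤ)) t
      else Ψ (n + 2 * (((j:ℕ) - m : ℕ) : ℤ)) t)))
    = ((Equiv.Perm.sign (CasAux.mv (⟨m+p, by omega⟩ : Fin (m+p+2)) ⟨m, by omega⟩) : ℤ) : ℂ)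
      * CasAux.Dfun Yc vc vd := by
    apply CasAux.colDet_eq_D
    intro j
    have hjlt := j.isLt
    clear hplk hcf hcfp hcfm hcg hch hdet hA hf hg hh R1 R2 R3 R4 R5
    have hval := CasAux.mv_val (⟨m+p, by omega⟩ : Fin (m+p+2)) ⟨m, by omega⟩
        (Fin.mk_le_mk.mpr (by omega)) j
    simp only [Fin.val_mk] at hval
    simp only [hval, hYc, hvc, hvd]
    split_ifs <;>
      first
        | omega
        | exact hPhiE _ _ (by omega)
        | exact hPsiE _ _ (by omega)
        | (rw [← hΦA, ← hΦA]; exact hPhiE _ _ (by omega))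
        | (rw [← hΨA, ← hΨA]; exact hPsiE _ _ (by omega))
        | (rw [← hΦA]; exact hPhiE _ _ (by omega))
        | (rw [← hΨA]; exact hPsiE _ _ (by omega))
        | contradiction
  -- sign values
  have s1 : ((Equiv.Perm.sign (CasAux.mv (⟨m+p, by omega⟩ : Fin (m+p+2)) ⟨0, by omega⟩) : ℤ) : ℂ)
      = (-1:ℂ)^(m+p) := by
    rw [CasAux.mv_sign]
    simp only [Fin.val_mk, Nat.add_zero]
  have s3 : ((Equiv.Perm.sign (CasAux.mv (⟨m+p, by omega⟩ : Fin (m+p+2)) ⟨m, by omega⟩) : ℤ) : ℂ)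
      = (-1:ℂ)^p := by
    rw [CasAux.mv_sign]
    simp only [Fin.val_mk]
    rw [show m+p+m = p+2*m by ring, pow_add, pow_mul]
    norm_num
  have s2 : ((Equiv.Perm.sign (CasAux.mv (⟨m+p, by omega⟩ : Fin (m+p+2)) ⟨m, by omega⟩
        * CasAux.mv (⟨m+p+1, by omega⟩ : Fin (m+p+2)) ⟨m+1, by omega⟩) : ℤ) : ℂ) = 1 := by
    rw [_root_.map_mul]
    push_cast
    rw [CasAux.mv_sign, CasAux.mv_sign]
    simp only [Fin.val_mk]
    rw [← pow_add, show (m+p+m) + ((m+p+1)+(m+1)) = 2*(2*m+p+1) by ring, pow_mul]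
    norm_num
  have s45 : ((Equiv.Perm.sign (CasAux.mv (⟨m+p, by omega⟩ : Fin (m+p+2)) ⟨0, by omega⟩
        * CasAux.mv (⟨m+p+1, by omega⟩ : Fin (m+p+2)) ⟨m+1, by omega⟩) : ℤ) : ℂ)
      = (-1:ℂ)^m := by
    rw [_root_.map_mul]
    push_cast
    rw [CasAux.mv_sign, CasAux.mv_sign]
    simp only [Fin.val_mk]
    rw [← pow_add, show (m+p+0) + ((m+p+1)+(m+1)) = m+2*(m+p+1) by ring, pow_add, pow_mul]
    norm_num
  -- the six relations in final form
  have e1 : f n t = (-1:ℂ)^(m+p) * CasAux.Dfun Yc va vd := by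
    rw [hcf, R1, s1]
  have e2 : A.det * (A.det * f n t) = CasAux.Dfun Yc vb vc := by
    rw [hcf]
    have t2 : A.det * (A.det * CasAux.colDet (fun j : Fin (m+p+2) =>
        if (j:ℕ) < m+1 then Φ (n + 2 * ((j:ℕ) : ℤ)) t
        else Ψ (n + 2 * (((j:ℕ) - (m+1) : ℕ) : ℤ)) t))
      = CasAux.colDet (fun j : Fin (m+p+2) => A.mulVec (A.mulVec (
        if (j:ℕ) < m+1 then Φ (n + 2 * ((j:ℕ) : ℤ)) t
        else Ψ (n + 2 * (((j:ℕ) - (m+1) : ℕ) : ℤ)) t))) :=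
      (CasAux.colDet_mulVec2 A _).symm
    rw [t2, R2, s2, one_mul]
  have e3 : A.det * f (n+1) t = (-1:ℂ)^p * CasAux.Dfun Yc vb vd := by
    rw [hcfp]
    have t3 : A.det * CasAux.colDet (fun j : Fin (m+p+2) =>
        if (j:ℕ) < m+1 then Φ (n+1 + 2 * ((j:ℕ) : ℤ)) t
        else Ψ (n+1 + 2 * (((j:ℕ) - (m+1) : ℕ) : ℤ)) t)
      = CasAux.colDet (fun j : Fin (m+p+2) => A.mulVec (
        if (j:ℕ) < m+1 then Φ (n+1 + 2 * ((j:ℕ) : ℤ)) t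
        else Ψ (n+1 + 2 * (((j:ℕ) - (m+1) : ℕ) : ℤ)) t)) :=
      (CasAux.colDet_mulVec A _).symm
    rw [t3, R3, s3]
  have e4 : A.det * f (n-1) t = (-1:ℂ)^m * CasAux.Dfun Yc va vc := by
    rw [hcfm]
    have t4 : A.det * CasAux.colDet (fun j : Fin (m+p+2) =>
        if (j:ℕ) < m+1 then Φ (n-1 + 2 * ((j:ℕ) : ℤ)) t
        else Ψ (n-1 + 2 * (((j:ℕ) - (m+1) : ℕ) : ℤ)) t)
      = CasAux.colDet (fun j : Fin (m+p+2) => A.mulVec (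
        if (j:ℕ) < m+1 then Φ (n-1 + 2 * ((j:ℕ) : ℤ)) t
        else Ψ (n-1 + 2 * (((j:ℕ) - (m+1) : ℕ) : ℤ)) t)) :=
      (CasAux.colDet_mulVec A _).symm
    rw [t4, R4, s45]
  have e5 : g n t = (-1:ℂ)^m * CasAux.Dfun Yc va vb := by
    rw [hcg, R5, s45]
  have e6 : A.det * (A.det * h n t) = -((-1:ℂ)^p * CasAux.Dfun Yc vc vd) := by
    have t6 : A.det * (A.det * CasAux.colDet (fun j : Fin (m+p+2) =>
        if (j:ℕ) < m then Φ (n + 2 * ((j:ℕ) : ℤ)) t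
        else Ψ (n + 2 * (((j:ℕ) - m : ℕ) : ℤ)) t))
      = CasAux.colDet (fun j : Fin (m+p+2) => A.mulVec (A.mulVec (
        if (j:ℕ) < m then Φ (n + 2 * ((j:ℕ) : ℤ)) t
        else Ψ (n + 2 * (((j:ℕ) - m : ℕ) : ℤ)) t))) :=
      (CasAux.colDet_mulVec2 A _).symm
    have t7 := t6.trans (R6.trans (by rw [s3]))
    rw [hch] at t7
    linear_combination -t7
  have big : A.det * A.det *
      ((f n t)^2 - f (n-1) t * f (n+1) t - g n t * h n t) = 0 := by
    linear_combination (f n t) * e2 + (CasAux.Dfun Yc vb vc) * e1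
      - (A.det * f (n+1) t) * e4 - ((-1:ℂ)^m * CasAux.Dfun Yc va vc) * e3
      - (g n t) * e6 + ((-1:ℂ)^p * CasAux.Dfun Yc vc vd) * e5
      + ((-1:ℂ)^m * (-1:ℂ)^p) * hplk
  rcases mul_eq_zero.mp big with hz | hz
  · rcases mul_eq_zero.mp hz with hz' | hz' <;> exact absurd hz' hdet
  · linear_combination hz
end

section
/- Let A and T be invertible (2m+2) × (2m+2) complex matrices with A⁻¹·T = T·conj(A), and let C, D ∈ ℂ^(2m+2) with D = T·conj(C). Define Φ(n,t) = Aⁿ · exp(−(i/2)(A² − 2I + A⁻²)t) · C and Ψ(n,t) = A⁻ⁿ · exp((i/2)(A² − 2I + A⁻²)t) · D, where Aⁿ denotes the n-th integer power of A (using A⁻¹ for negative n) and exp is the matrix exponential. Then Ψ(n,t) = T · conj(Φ(n,t)) for all n ∈ ℤ and t ∈ ℝ. -/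
open Matrix

set_option maxHeartbeats 1000000 in
/-- if `A⁻¹T = T·conj(A)` and `D = T·conj(C)`, then the vector functions
`Φ(n,t) = Aⁿ exp(−(i/2)(A²−2I+A⁻²)t) C` and `Ψ(n,t) = A⁻ⁿ exp((i/2)(A²−2I+A⁻²)t) D`
satisfy `Ψ(n,t) = T·conj(Φ(n,t))`. -/
theorem psi_eq_T_conj_phi (m : ℕ)
    (A T : Matrix (Fin (2 * m + 2)) (Fin (2 * m + 2)) ℂ)
    (hA : IsUnit A) (hT : IsUnit T)
    (hAT : A⁻¹ * T = T * A.map (starRingEnd ℂ))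
    (C D : Fin (2 * m + 2) → ℂ)
    (hD : D = T.mulVec fun i => starRingEnd ℂ (C i))
    (Φ Ψ : ℤ → ℝ → Fin (2 * m + 2) → ℂ)
    (hΦ : ∀ (n : ℤ) (t : ℝ), Φ n t =
      ((A ^ n) * NormedSpace.exp
        ((-(Complex.I / 2) * (t : ℂ)) • (A ^ 2 - (2 : ℂ) • 1 + A ^ (-2 : ℤ)))).mulVec C)
    (hΨ : ∀ (n : ℤ) (t : ℝ), Ψ n t =
      ((A ^ (-n)) * NormedSpace.exp
        (((Complex.I / 2) * (t : ℂ)) • (A ^ 2 - (2 : ℂ) • 1 + A ^ (-2 : ℤ)))).mulVec D) :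
    ∀ (n : ℤ) (t : ℝ), Ψ n t = T.mulVec fun i => starRingEnd ℂ (Φ n t i) := by
  intro n t
  set σ := starRingEnd ℂ with hσ
  have hdA : IsUnit A.det := (Matrix.isUnit_iff_isUnit_det A).mp hA
  have hdT : IsUnit T.det := (Matrix.isUnit_iff_isUnit_det T).mp hT
  have hAAinv : A * A⁻¹ = 1 := Matrix.mul_nonsing_inv A hdA
  have hTinvT : T⁻¹ * T = 1 := Matrix.nonsing_inv_mul T hdT
  have hTTinv : T * T⁻¹ = 1 := Matrix.mul_nonsing_inv T hdT
  have hTA : T * A.map σ = A⁻¹ * T := hAT.symm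
  have hTAinv : T * (A⁻¹).map σ = A * T := by
    have h1 : (A * A⁻¹).map σ = 1 := by
      rw [hAAinv]; ext i j
      simp only [Matrix.map_apply, Matrix.one_apply, apply_ite]
      split_ifs <;> simp
    have h2 : A.map σ * (A⁻¹).map σ = 1 := by rw [← Matrix.map_mul]; exact h1
    calc T * (A⁻¹).map σ = A * (A⁻¹ * T) * (A⁻¹).map σ := by
            rw [← mul_assoc, hAAinv, one_mul]
      _ = A * (T * (A.map σ * (A⁻¹).map σ)) := by rw [hAT, mul_assoc, mul_assoc]
      _ = A * T := by rw [h2, mul_one]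
  -- key: T * conj(A^k) = A^(-k) * T for all integers k
  have key : ∀ k : ℤ, T * (A ^ k).map σ = A ^ (-k) * T := by
    intro k
    induction k using Int.induction_on with
    | zero => simp [Matrix.map_one]
    | succ j ih =>
        have h : A ^ ((j : ℤ) + 1) = A ^ (j : ℤ) * A := Matrix.zpow_add_one hdA j
        rw [h, Matrix.map_mul, ← mul_assoc, ih, mul_assoc, hTA, ← mul_assoc,
          ← Matrix.zpow_sub_one hdA, neg_add, sub_eq_add_neg]
    | pred j ih =>
        have h : A ^ (-(j : ℤ) - 1) = A ^ (-(j : ℤ)) * A⁻¹ := Matrix.zpow_sub_one hdA _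
        rw [h, Matrix.map_mul, ← mul_assoc, ih, mul_assoc, hTAinv, ← mul_assoc,
          ← Matrix.zpow_add_one hdA, neg_sub, sub_eq_neg_add]
  set B : Matrix (Fin (2 * m + 2)) (Fin (2 * m + 2)) ℂ :=
    A ^ 2 - (2 : ℂ) • 1 + A ^ (-2 : ℤ) with hB
  have h2smul : ((2 : ℂ) • (1 : Matrix (Fin (2 * m + 2)) (Fin (2 * m + 2)) ℂ)).map σ
      = (2 : ℂ) • 1 := by
    ext i j
    simp only [Matrix.map_apply, Matrix.smul_apply, Matrix.one_apply, smul_ite, smul_eq_mul]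
    split_ifs <;> simp [hσ, Complex.conj_ofNat]
  have hA2 : (A : Matrix (Fin (2 * m + 2)) (Fin (2 * m + 2)) ℂ) ^ (2 : ℕ) = A ^ (2 : ℤ) := by
    norm_cast
  have keyB : T * B.map σ = B * T := by
    have hmap : B.map σ = (A ^ (2 : ℤ)).map σ - (2 : ℂ) • 1 + (A ^ (-2 : ℤ)).map σ := by
      conv_lhs => rw [hB, hA2, ← RingHom.mapMatrix_apply]
      rw [map_add, map_sub]
      simp only [RingHom.mapMatrix_apply]
      rw [h2smul]
    rw [hmap, mul_add, mul_sub, key 2, key (-2), neg_neg, hB, add_mul, sub_mul, hA2]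
    have h2T : T * ((2 : ℂ) • (1 : Matrix (Fin (2 * m + 2)) (Fin (2 * m + 2)) ℂ))
        = ((2 : ℂ) • 1) * T := by
      rw [Matrix.mul_smul, Matrix.smul_mul, mul_one, one_mul]
    rw [h2T]
    abel
  have hBconj : B.map σ = T⁻¹ * B * T := by
    calc B.map σ = T⁻¹ * (T * B.map σ) := by rw [← mul_assoc, hTinvT, one_mul]
      _ = T⁻¹ * B * T := by rw [keyB, mul_assoc]
  have hmap_smul : ∀ (z : ℂ) (M : Matrix (Fin (2 * m + 2)) (Fin (2 * m + 2)) ℂ),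
      (z • M).map σ = σ z • M.map σ := by
    intro z M; ext i j; simp [Matrix.map_apply]
  have hexp : ∀ M : Matrix (Fin (2 * m + 2)) (Fin (2 * m + 2)) ℂ,
      (NormedSpace.exp M).map σ = NormedSpace.exp (M.map σ) := by
    intro M
    have h1 : M.map σ = (Mᴴ)ᵀ := by
      ext i j; simp [Matrix.conjTranspose_apply, hσ]
    rw [h1, Matrix.exp_transpose, Matrix.exp_conjTranspose]
    ext i j; simp [Matrix.conjTranspose_apply, hσ]
  have hz : σ (-(Complex.I / 2) * (t : ℂ)) = (Complex.I / 2) * (t : ℂ) := by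
    simp only [hσ, _root_.map_mul, map_neg, map_div₀, map_ofNat, Complex.conj_I,
      Complex.conj_ofReal]
    ring
  have hconj_mulVec : ∀ (M : Matrix (Fin (2 * m + 2)) (Fin (2 * m + 2)) ℂ)
      (v : Fin (2 * m + 2) → ℂ),
      (fun i => σ ((M.mulVec v) i)) = (M.map σ).mulVec (fun i => σ (v i)) := by
    intro M v; funext i
    simp [Matrix.mulVec, dotProduct, map_sum, Matrix.map_apply]
  set Em := NormedSpace.exp ((-(Complex.I / 2) * (t : ℂ)) • B) with hEm
  set Ep := NormedSpace.exp (((Complex.I / 2) * (t : ℂ)) • B) with hEp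
  have hEconj : Em.map σ = T⁻¹ * Ep * T := by
    rw [hEm, hexp, hmap_smul, hz, hBconj]
    have hsm : ((Complex.I / 2) * (t : ℂ)) • (T⁻¹ * B * T)
        = T⁻¹ * (((Complex.I / 2) * (t : ℂ)) • B) * T := by
      rw [Matrix.mul_smul, Matrix.smul_mul]
    rw [hsm, Matrix.exp_conj' T _ hT]
  have hM : T * ((A ^ n * Em).map σ) = (A ^ (-n) * Ep) * T := by
    rw [Matrix.map_mul, ← mul_assoc, key n, mul_assoc, hEconj]
    rw [show T * (T⁻¹ * Ep * T) = Ep * T by rw [← mul_assoc, ← mul_assoc, hTTinv, one_mul]]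
    rw [mul_assoc]
  rw [hΨ, hΦ, hD, hconj_mulVec, Matrix.mulVec_mulVec, Matrix.mulVec_mulVec, hM]
end

section
/- Let δ ∈ {1,−1}, let T be a (2m+2) × (2m+2) complex matrix with T·conj(T) = δ·I, and let Φ : ℤ × ℝ → ℂ^(2m+2) be any function. Define f(n,t) to be the determinant of the (2m+2) × (2m+2) matrix whose columns are Φ(n,t), Φ(n+2,t), …, Φ(n+2m,t), T·conj(Φ(n,t)), T·conj(Φ(n+2,t)), …, T·conj(Φ(n+2m,t)). Then f(n,t) = (−δ)^(m+1) · det(T) · conj(f(n,t)) for all (n,t). -/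
open Matrix
open Fin.NatCast

lemma addRight_eq_pow_finRotate (n k : ℕ) :
    Equiv.addRight ((k : Fin (n + 1))) = (finRotate (n + 1)) ^ k := by
  induction k with
  | zero => ext x; simp
  | succ k ih =>
    ext x
    rw [pow_succ', Equiv.Perm.mul_apply, ← ih]
    simp only [Equiv.coe_addRight, finRotate_succ_apply]
    push_cast
    rw [add_assoc]

lemma prod_ite_blocks (m N : ℕ) (δ : ℂ) :
    (∏ k ∈ Finset.range (m + 1 + N), (if k < m + 1 then (1 : ℂ) else δ)) = δ ^ N := by
  induction N with
  | zero => exact Finset.prod_eq_one (fun k hk => if_pos (Finset.mem_range.mp hk))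
  | succ N ih =>
    have : m + 1 + (N + 1) = (m + 1 + N) + 1 := by ring
    rw [this, Finset.prod_range_succ, ih, if_neg (by omega), pow_succ]

/-- if `T·conj(T) = δI` with `δ = ±1`, then the double Casoratian `f`
built from `Φ` and `T·conj(Φ)` satisfies `f = (−δ)^(m+1)·det(T)·conj(f)`. -/
theorem casoratian_conj_relation_f (m : ℕ) (δ : ℂ) (hδ : δ = 1 ∨ δ = -1)
    (T : Matrix (Fin (2 * m + 2)) (Fin (2 * m + 2)) ℂ)
    (hT : T * T.map (starRingEnd ℂ) = δ • (1 : Matrix (Fin (2 * m + 2)) (Fin (2 * m + 2)) ℂ))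
    (Φ : ℤ → ℝ → Fin (2 * m + 2) → ℂ)
    (f : ℤ → ℝ → ℂ)
    (hf : ∀ (n : ℤ) (t : ℝ), f n t =
      Matrix.det (Matrix.of fun i j : Fin (2 * m + 2) =>
        if (j : ℕ) < m + 1 then Φ (n + 2 * ((j : ℕ) : ℤ)) t i
        else (T.mulVec fun r =>
          starRingEnd ℂ (Φ (n + 2 * ((((j : ℕ) - (m + 1) : ℕ)) : ℤ)) t r)) i)) :
    ∀ (n : ℤ) (t : ℝ), f n t = (-δ) ^ (m + 1) * T.det * starRingEnd ℂ (f n t) := by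
  intro n t
  set M : Matrix (Fin (2 * m + 2)) (Fin (2 * m + 2)) ℂ :=
    Matrix.of fun i j : Fin (2 * m + 2) =>
      if (j : ℕ) < m + 1 then Φ (n + 2 * ((j : ℕ) : ℤ)) t i
      else (T.mulVec fun r =>
        starRingEnd ℂ (Φ (n + 2 * ((((j : ℕ) - (m + 1) : ℕ)) : ℤ)) t r)) i with hM
  -- the block-swap permutation
  set τ : Equiv.Perm (Fin (2 * m + 2)) := Equiv.addRight (((m + 1 : ℕ) : Fin (2 * m + 2))) with hτ
  have hval : (((m + 1 : ℕ) : Fin (2 * m + 2)) : ℕ) = m + 1 :=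
    Fin.val_cast_of_lt (by omega)
  have hτval : ∀ j : Fin (2 * m + 2), ((τ j : Fin (2 * m + 2)) : ℕ)
      = (j.val + (m + 1)) % (2 * m + 2) := by
    intro j
    simp only [hτ, Equiv.coe_addRight, Fin.val_add, hval]
  have hτ1 : ∀ j : Fin (2 * m + 2), (j : ℕ) < m + 1 →
      ((τ j : Fin (2 * m + 2)) : ℕ) = j.val + (m + 1) := by
    intro j hj
    rw [hτval, Nat.mod_eq_of_lt (by omega)]
  have hτ2 : ∀ j : Fin (2 * m + 2), ¬ (j : ℕ) < m + 1 →
      ((τ j : Fin (2 * m + 2)) : ℕ) = j.val - (m + 1) := by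
    intro j hj
    have hlt := j.isLt
    rw [hτval, Nat.mod_eq_sub_mod (by omega), Nat.mod_eq_of_lt (by omega)]
    omega
  -- the column scaling
  set d : Fin (2 * m + 2) → ℂ := fun j => if (j : ℕ) < m + 1 then 1 else δ with hd
  -- key matrix identity
  have hkey : T * (M.map (starRingEnd ℂ)) = (M.submatrix id τ) * Matrix.diagonal d := by
    ext i j
    rw [Matrix.mul_apply, Matrix.mul_diagonal, Matrix.submatrix_apply, id_eq]
    by_cases hj : (j : ℕ) < m + 1
    · have h1 := hτ1 j hj
      have h2 : ¬ ((τ j : Fin (2 * m + 2)) : ℕ) < m + 1 := by omega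
      have h3 : ((τ j : Fin (2 * m + 2)) : ℕ) - (m + 1) = (j : ℕ) := by omega
      simp only [hM, hd, Matrix.map_apply, Matrix.of_apply, if_pos hj, if_neg h2, h3,
        mul_one, Matrix.mulVec, dotProduct]
    · have h1 := hτ2 j hj
      have hlt := j.isLt
      have h2 : ((τ j : Fin (2 * m + 2)) : ℕ) < m + 1 := by omega
      have hTδ : ∀ v : Fin (2 * m + 2) → ℂ, ∀ i,
          (∑ k, T i k * starRingEnd ℂ ((T.mulVec fun r => starRingEnd ℂ (v r)) k))
            = δ * v i := by
        intro v i
        have h : (T * T.map (starRingEnd ℂ)).mulVec v = δ • v := by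
          rw [hT, Matrix.smul_mulVec, Matrix.one_mulVec]
        have h' : (∑ k, T i k * starRingEnd ℂ ((T.mulVec fun r => starRingEnd ℂ (v r)) k))
            = (T.mulVec ((T.map (starRingEnd ℂ)).mulVec v)) i := by
          simp only [Matrix.mulVec, dotProduct, Matrix.map_apply, map_sum,
            _root_.map_mul, starRingEnd_self_apply]
        rw [h', Matrix.mulVec_mulVec, h]
        rfl
      simp only [hM, hd, Matrix.map_apply, Matrix.of_apply, if_neg hj, if_pos h2]
      simp only [h1]
      rw [hTδ (fun r => Φ (n + 2 * (((j : ℕ) - (m + 1) : ℕ) : ℤ)) t r) i]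
      ring
  -- determinant consequences
  have hconj : starRingEnd ℂ (f n t) = (M.map (starRingEnd ℂ)).det := by
    rw [hf n t, ← hM, RingHom.map_det]
    rfl
  have hsign : ((Equiv.Perm.sign τ : ℤ) : ℂ) = (-1) ^ (m + 1) := by
    have h1 : τ = (finRotate (2 * m + 1 + 1)) ^ (m + 1) := by
      rw [hτ]; exact addRight_eq_pow_finRotate (2 * m + 1) (m + 1)
    rw [h1, map_pow, sign_finRotate]
    have : ((-1 : ℤˣ) ^ (2 * m + 1)) = -1 := Odd.neg_one_pow ⟨m, by ring⟩
    rw [show 2 * m + 2 - 1 = 2 * m + 1 by omega, this]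
    push_cast
    ring
  have hprodd : (∏ j, d j) = δ ^ (m + 1) := by
    rw [hd, Fin.prod_univ_eq_prod_range (fun k => if k < m + 1 then (1:ℂ) else δ)]
    have h2 : 2 * m + 2 = m + 1 + (m + 1) := by ring
    rw [h2, prod_ite_blocks]
  have hdet : T.det * starRingEnd ℂ (f n t) = (-δ) ^ (m + 1) * f n t := by
    rw [hconj, ← Matrix.det_mul, hkey, Matrix.det_mul, Matrix.det_permute',
      Matrix.det_diagonal, hprodd, hf n t, ← hM]
    rw [show ((Equiv.Perm.sign τ : ℤ) : ℂ) = (-1) ^ (m + 1) from hsign]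
    ring
  have hδ2 : (-δ) ^ (m + 1) * (-δ) ^ (m + 1) = 1 := by
    rw [← mul_pow, neg_mul_neg]
    rcases hδ with h | h <;> simp [h]
  calc f n t = ((-δ) ^ (m + 1) * (-δ) ^ (m + 1)) * f n t := by rw [hδ2, one_mul]
    _ = (-δ) ^ (m + 1) * ((-δ) ^ (m + 1) * f n t) := by ring
    _ = (-δ) ^ (m + 1) * (T.det * starRingEnd ℂ (f n t)) := by rw [hdet]
    _ = (-δ) ^ (m + 1) * T.det * starRingEnd ℂ (f n t) := by ring
end

section
/- Let δ ∈ {1,−1}, let T be a (2m+2) × (2m+2) complex matrix with T·conj(T) = δ·I, m ≥ 1, and let Φ : ℤ × ℝ → ℂ^(2m+2) be any function. Define g(n,t) = det of the matrix with columns Φ(n,t), Φ(n+2,t), …, Φ(n+2(m+1),t), T·conj(Φ(n,t)), …, T·conj(Φ(n+2(m−1),t)), and h(n,t) = −det of the matrix with columns Φ(n,t), …, Φ(n+2(m−1),t), T·conj(Φ(n,t)), …, T·conj(Φ(n+2(m+1),t)). Then h(n,t) = −(−δ)^m · det(T) · conj(g(n,t)) for all (n,t). -/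
open Matrix
open Fin.NatCast

lemma addRight_natCast_eq_pow (n k : ℕ) :
    (Equiv.addRight ((k : Fin (n + 1)))) = (finRotate (n + 1)) ^ k := by
  induction k with
  | zero => ext x; simp
  | succ k ih =>
    ext x
    simp only [pow_succ, Equiv.Perm.mul_apply, ← ih, Equiv.coe_addRight,
      finRotate_succ_apply, Nat.cast_add, Nat.cast_one]
    rw [add_assoc, add_comm ((k : Fin (n + 1))) 1]

lemma sign_addRight_natCast (n k : ℕ) :
    Equiv.Perm.sign (Equiv.addRight ((k : Fin (n + 1)))) = ((-1) ^ n) ^ k := by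
  rw [addRight_natCast_eq_pow, map_pow, sign_finRotate, Nat.add_sub_cancel]

/-- if `T·conj(T) = δI` with `δ = ±1` and `m ≥ 1`, then the Casoratians
`g` (with `m+2` columns from `Φ` and `m` from `T·conj(Φ)`) and `h` (the negative of the
determinant with `m` columns from `Φ` and `m+2` from `T·conj(Φ)`) satisfy
`h = −(−δ)^m·det(T)·conj(g)`. -/
theorem casoratian_conj_relation_gh (m : ℕ) (hm : 1 ≤ m) (δ : ℂ) (hδ : δ = 1 ∨ δ = -1)
    (T : Matrix (Fin (2 * m + 2)) (Fin (2 * m + 2)) ℂ)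
    (hT : T * T.map (starRingEnd ℂ) = δ • (1 : Matrix (Fin (2 * m + 2)) (Fin (2 * m + 2)) ℂ))
    (Φ : ℤ → ℝ → Fin (2 * m + 2) → ℂ)
    (g h : ℤ → ℝ → ℂ)
    (hg : ∀ (n : ℤ) (t : ℝ), g n t =
      Matrix.det (Matrix.of fun i j : Fin (2 * m + 2) =>
        if (j : ℕ) < m + 2 then Φ (n + 2 * ((j : ℕ) : ℤ)) t i
        else (T.mulVec fun r =>
          starRingEnd ℂ (Φ (n + 2 * ((((j : ℕ) - (m + 2) : ℕ)) : ℤ)) t r)) i))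
    (hh : ∀ (n : ℤ) (t : ℝ), h n t =
      -Matrix.det (Matrix.of fun i j : Fin (2 * m + 2) =>
        if (j : ℕ) < m then Φ (n + 2 * ((j : ℕ) : ℤ)) t i
        else (T.mulVec fun r =>
          starRingEnd ℂ (Φ (n + 2 * ((((j : ℕ) - m : ℕ)) : ℤ)) t r)) i)) :
    ∀ (n : ℤ) (t : ℝ), h n t = -(-δ) ^ m * T.det * starRingEnd ℂ (g n t) := by
  intro n t
  have hδ2 : δ * δ = 1 := by rcases hδ with h | h <;> simp [h]
  -- the conjugated `g`-matrix
  set A : Matrix (Fin (2 * m + 2)) (Fin (2 * m + 2)) ℂ :=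
    (Matrix.of fun i j : Fin (2 * m + 2) =>
      if (j : ℕ) < m + 2 then Φ (n + 2 * ((j : ℕ) : ℤ)) t i
      else (T.mulVec fun r =>
        starRingEnd ℂ (Φ (n + 2 * ((((j : ℕ) - (m + 2) : ℕ)) : ℤ)) t r)) i).map
      (starRingEnd ℂ) with hA
  have hconjg : starRingEnd ℂ (g n t) = A.det := by
    rw [hg]; exact RingHom.map_det _ _
  -- the "swapped blocks" matrix
  set C : Matrix (Fin (2 * m + 2)) (Fin (2 * m + 2)) ℂ :=
    Matrix.of (fun i j : Fin (2 * m + 2) =>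
      if (j : ℕ) < m + 2 then
        (T.mulVec fun r => starRingEnd ℂ (Φ (n + 2 * ((j : ℕ) : ℤ)) t r)) i
      else Φ (n + 2 * ((((j : ℕ) - (m + 2) : ℕ)) : ℤ)) t i) with hC
  -- step 1 : T * A is C with the last m columns scaled by δ
  have key : T * A = Matrix.of (fun i j : Fin (2 * m + 2) =>
      (if (j : ℕ) < m + 2 then (1 : ℂ) else δ) * C i j) := by
    ext i j
    by_cases hj : (j : ℕ) < m + 2
    · simp only [Matrix.mul_apply, hA, hC, Matrix.map_apply, Matrix.of_apply, hj, if_true,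
        one_mul, Matrix.mulVec, dotProduct]
    · have colA : (fun k => A k j) =
          (T.map (starRingEnd ℂ)).mulVec
            (fun r => Φ (n + 2 * ((((j : ℕ) - (m + 2) : ℕ)) : ℤ)) t r) := by
        funext k
        simp only [hA, Matrix.map_apply, Matrix.of_apply, hj, if_false, Matrix.mulVec,
          dotProduct, map_sum, _root_.map_mul, RingHomCompTriple.comp_apply]
        simp
      have : (fun k => (T * A) k j) = fun k =>
          (T.mulVec (fun r => A r j)) k := by
        funext k
        simp [Matrix.mul_apply, Matrix.mulVec, dotProduct]
      calc (T * A) i j = (T.mulVec fun r => A r j) i := by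
            simp [Matrix.mul_apply, Matrix.mulVec, dotProduct]
        _ = ((T * T.map (starRingEnd ℂ)).mulVec
              (fun r => Φ (n + 2 * ((((j : ℕ) - (m + 2) : ℕ)) : ℤ)) t r)) i := by
            rw [colA, Matrix.mulVec_mulVec]
        _ = δ * Φ (n + 2 * ((((j : ℕ) - (m + 2) : ℕ)) : ℤ)) t i := by
            rw [hT, Matrix.smul_mulVec, Matrix.one_mulVec]
            simp
        _ = (if (j : ℕ) < m + 2 then (1 : ℂ) else δ) * C i j := by
            simp [hC, hj]
  -- step 2 : the scaling factor
  have hprod : (∏ j : Fin (2 * m + 2), (if (j : ℕ) < m + 2 then (1 : ℂ) else δ)) = δ ^ m := by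
    rw [Fin.prod_univ_eq_prod_range (fun j : ℕ => if j < m + 2 then (1 : ℂ) else δ)]
    rw [show 2 * m + 2 = (m + 2) + m by ring, Finset.prod_range_add]
    have h1 : (∏ x ∈ Finset.range (m + 2), (if x < m + 2 then (1 : ℂ) else δ)) = 1 :=
      Finset.prod_eq_one (fun x hx => by
        simp [Finset.mem_range.mp hx])
    have h2 : (∏ x ∈ Finset.range m, (if (m + 2) + x < m + 2 then (1 : ℂ) else δ)) = δ ^ m := by
      rw [Finset.prod_congr rfl (fun x _ => by
        rw [if_neg (by omega)]), Finset.prod_const, Finset.card_range]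
    rw [h1, h2, one_mul]
  have hdetTA : T.det * A.det = δ ^ m * C.det := by
    have := congrArg Matrix.det key
    rwa [Matrix.det_mul, Matrix.det_mul_row, hprod] at this
  have hdetC : C.det = δ ^ m * T.det * A.det := by
    have hδm : δ ^ m * δ ^ m = 1 := by
      rw [← pow_add, show m + m = 2 * m by ring, pow_mul, sq, hδ2, one_pow]
    calc C.det = δ ^ m * (δ ^ m * C.det) := by rw [← mul_assoc, hδm, one_mul]
      _ = δ ^ m * (T.det * A.det) := by rw [hdetTA]
      _ = δ ^ m * T.det * A.det := by ring
  -- step 3 : the h-matrix is C with columns permuted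
  have hc : (((m + 2 : ℕ) : Fin (2 * m + 2)) : ℕ) = m + 2 := by
    rw [Fin.val_natCast, Nat.mod_eq_of_lt (by omega)]
  set σ : Equiv.Perm (Fin (2 * m + 2)) := Equiv.addRight ((m + 2 : ℕ) : Fin (2 * m + 2)) with hσ
  have hMh : (Matrix.of fun i j : Fin (2 * m + 2) =>
      if (j : ℕ) < m then Φ (n + 2 * ((j : ℕ) : ℤ)) t i
      else (T.mulVec fun r =>
        starRingEnd ℂ (Φ (n + 2 * ((((j : ℕ) - m : ℕ)) : ℤ)) t r)) i)
      = C.submatrix id σ := by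
    ext i j
    have hval : ((σ j : Fin (2 * m + 2)) : ℕ) = ((j : ℕ) + (m + 2)) % (2 * m + 2) := by
      simp only [hσ, Equiv.coe_addRight, Fin.val_add, hc]
    by_cases hj : (j : ℕ) < m
    · have hv : ((σ j : Fin (2 * m + 2)) : ℕ) = (j : ℕ) + (m + 2) := by
        rw [hval, Nat.mod_eq_of_lt (by omega)]
      have hnlt : ¬ ((σ j : Fin (2 * m + 2)) : ℕ) < m + 2 := by omega
      have hsub : (((σ j : Fin (2 * m + 2)) : ℕ) - (m + 2) : ℕ) = (j : ℕ) := by omega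
      simp only [Matrix.of_apply, Matrix.submatrix_apply, id, hC, hj, if_true,
        hnlt, if_false, hsub]
    · have hjlt : (j : ℕ) < 2 * m + 2 := j.isLt
      have hv : ((σ j : Fin (2 * m + 2)) : ℕ) = (j : ℕ) - m := by
        rw [hval, Nat.mod_eq_sub_mod (by omega), Nat.mod_eq_of_lt (by omega)]
        omega
      have hlt : ((σ j : Fin (2 * m + 2)) : ℕ) < m + 2 := by omega
      have hvv : (((σ j : Fin (2 * m + 2)) : ℕ) : ℤ) = (((j : ℕ) - m : ℕ) : ℤ) := by
        rw [hv]
      simp only [Matrix.of_apply, Matrix.submatrix_apply, id, hC, hj, if_false,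
        hlt, if_true, hvv]
  -- step 4 : the sign of the permutation
  have hsign : ((Equiv.Perm.sign σ : ℤ) : ℂ) = (-1) ^ m := by
    have h1 : Equiv.Perm.sign σ = ((-1 : ℤˣ) ^ (2 * m + 1)) ^ (m + 2) := by
      rw [hσ]; exact sign_addRight_natCast (2 * m + 1) (m + 2)
    have h2 : ((-1 : ℤˣ) ^ (2 * m + 1)) ^ (m + 2) = (-1 : ℤˣ) ^ m := by
      rw [← pow_mul, show (2 * m + 1) * (m + 2) = 2 * (m ^ 2 + 2 * m + 1) + m by ring,
        pow_add, pow_mul]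
      norm_num
    rw [h1, h2]
    push_cast
    ring
  -- conclusion
  rw [hh, hMh, Matrix.det_permute', hconjg, hdetC, neg_pow]
  rw [show (((Equiv.Perm.sign σ : ℤ) : ℂ) * (δ ^ m * T.det * A.det)) =
    ((Equiv.Perm.sign σ : ℤ) : ℂ) * δ ^ m * T.det * A.det by ring, hsign]
  ring
end

section
/- Let δ ∈ {1,−1}, let A and T be invertible (2m+2) × (2m+2) complex matrices with A·T = T·conj(A) and T·conj(T) = −δ·|det A|²·I (where |det A|² = det(A)·conj(det(A))), and let Φ : ℤ × ℝ → ℂ^(2m+2) be any function. Define f(n,t) = det of the (2m+2) × (2m+2) matrix whose columns are A^(−m+2j)·Φ(n,t) for j = 0,…,m followed by A^(m−2j)·T·conj(Φ(−n,t)) for j = 0,…,m; define g(n,t) = det of the matrix with columns A^(−m+2j)·Φ(n,t) for j = 0,…,m+1 followed by A^(m−2j)·T·conj(Φ(−n,t)) for j = 0,…,m−1; and define h(n,t) = −det of the matrix with columns A^(−m+2j)·Φ(n,t) for j = 0,…,m−1 followed by A^(m−2j)·T·conj(Φ(−n,t)) for j = 0,…,m+1. Then f(n,t) = (δ·|det A|^(−2))^(m+1)·det(T)·conj(f(−n,t))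 and h(n,t) = δ^m·|det A|^(−2(m+1))·det(T)·conj(g(−n,t)) for all (n,t). -/
open Matrix

section Aux

open Equiv Equiv.Perm

private lemma revPerm_decompose (n : ℕ) :
    Equiv.Perm.decomposeFin.symm (0, (Fin.revPerm : Equiv.Perm (Fin n))) =
      finRotate (n + 1) * (Fin.revPerm : Equiv.Perm (Fin (n + 1))) := by
  ext i
  refine Fin.cases ?_ (fun x => ?_) i
  · simp [Equiv.Perm.decomposeFin_symm_apply_zero, Equiv.Perm.mul_apply,
      Fin.rev_zero, finRotate_last]
  · rw [Equiv.Perm.decomposeFin_symm_apply_succ]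
    simp [Equiv.Perm.mul_apply, Fin.rev_succ, Fin.coeSucc_eq_succ]

private lemma sign_revPerm_step (n : ℕ) :
    Equiv.Perm.sign (Fin.revPerm : Equiv.Perm (Fin (n + 1))) =
      (-1) ^ n * Equiv.Perm.sign (Fin.revPerm : Equiv.Perm (Fin n)) := by
  have h := congrArg Equiv.Perm.sign (revPerm_decompose n)
  rw [Equiv.Perm.decomposeFin.symm_sign, _root_.map_mul, sign_finRotate, if_pos rfl, one_mul] at h
  rw [h, ← mul_assoc, Nat.succ_sub_one, ← mul_pow]
  norm_num

private lemma sign_revPerm_two_step (n : ℕ) :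
    Equiv.Perm.sign (Fin.revPerm : Equiv.Perm (Fin (n + 2))) =
      - Equiv.Perm.sign (Fin.revPerm : Equiv.Perm (Fin n)) := by
  rw [sign_revPerm_step (n + 1), sign_revPerm_step n, ← mul_assoc]
  have h : ((-1 : ℤˣ)) ^ (n + 1) * (-1) ^ n = -1 := by
    rw [← pow_add]
    exact Odd.neg_one_pow ⟨n, by ring⟩
  rw [h, neg_one_mul]

private lemma sign_revPerm_div2 :
    ∀ n : ℕ, Equiv.Perm.sign (Fin.revPerm : Equiv.Perm (Fin n)) = (-1) ^ (n / 2)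
  | 0 => by
      have h : (Fin.revPerm : Equiv.Perm (Fin 0)) = 1 := by
        ext i; exact i.elim0
      simp [h]
  | 1 => by
      have h : (Fin.revPerm : Equiv.Perm (Fin 1)) = 1 := by
        ext i; simp [Subsingleton.elim (Fin.revPerm i) i]
      simp [h]
  | (n + 2) => by
      rw [sign_revPerm_two_step n, sign_revPerm_div2 n]
      have h2 : (n + 2) / 2 = n / 2 + 1 := by omega
      rw [h2, pow_succ, mul_neg_one]

private lemma prod_ite_pow (NN p : ℕ) (x : ℂ) :
    (∏ j : Fin NN, (if (j : ℕ) < p then (1 : ℂ) else x)) = x ^ (NN - p) := by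
  rw [Fin.prod_univ_eq_prod_range (fun j => if j < p then (1 : ℂ) else x) NN,
    Finset.prod_ite]
  have hfil : (Finset.range NN).filter (fun j => ¬ j < p) = Finset.Ico p NN := by
    ext a; simp [Finset.mem_Ico]; omega
  simp only [hfil, Finset.prod_const, Finset.prod_const_one, one_pow, one_mul, Nat.card_Ico]

private lemma map_zpow_star {N : Type*} [DecidableEq N] [Fintype N]
    (A : Matrix N N ℂ) (hA : IsUnit A.det) (k : ℤ) :
    (A ^ k).map (starRingEnd ℂ) = (A.map (starRingEnd ℂ)) ^ k := by
  cases k with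
  | ofNat n =>
      rw [Int.ofNat_eq_coe, zpow_natCast, zpow_natCast]
      simpa using map_pow ((starRingEnd ℂ).mapMatrix) A n
  | negSucc n =>
      rw [zpow_negSucc, zpow_negSucc]
      have hpow : ((A ^ (n + 1)).map (starRingEnd ℂ)) = (A.map (starRingEnd ℂ)) ^ (n + 1) := by
        simpa using map_pow ((starRingEnd ℂ).mapMatrix) A (n + 1)
      have hB : IsUnit (A ^ (n + 1)).det := by
        rw [Matrix.det_pow]; exact hA.pow _
      have hmul : (A ^ (n + 1)).map (starRingEnd ℂ) * ((A ^ (n + 1))⁻¹).map (starRingEnd ℂ)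
          = 1 := by
        rw [← Matrix.map_mul, Matrix.mul_nonsing_inv _ hB]
        exact Matrix.map_one _ (map_zero _) (map_one _)
      rw [← hpow]
      exact (Matrix.inv_eq_right_inv hmul).symm

end Aux

/-- reverse-space reduction relations between the double Casoratians
`f`, `g`, `h` built from `A^(−m+2j)Φ(n,t)` and `A^(m−2j)T·conj(Φ(−n,t))`. -/
theorem reverse_space_casoratian_relations (m : ℕ) (hm : 1 ≤ m)
    (δ : ℂ) (hδ : δ = 1 ∨ δ = -1)
    (A T : Matrix (Fin (2 * m + 2)) (Fin (2 * m + 2)) ℂ)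
    (hA : IsUnit A) (hTu : IsUnit T)
    (hAT : A * T = T * A.map (starRingEnd ℂ))
    (hTT : T * T.map (starRingEnd ℂ) =
      (-δ * (A.det * starRingEnd ℂ A.det)) • (1 : Matrix (Fin (2 * m + 2)) (Fin (2 * m + 2)) ℂ))
    (Φ : ℤ → ℝ → Fin (2 * m + 2) → ℂ)
    (f g h : ℤ → ℝ → ℂ)
    (hf : ∀ (n : ℤ) (t : ℝ), f n t =
      Matrix.det (Matrix.of fun i j : Fin (2 * m + 2) =>
        if (j : ℕ) < m + 1 then
          ((A ^ (-(m : ℤ) + 2 * ((j : ℕ) : ℤ))).mulVec (Φ n t)) i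
        else
          ((A ^ ((m : ℤ) - 2 * ((((j : ℕ) - (m + 1) : ℕ)) : ℤ)) * T).mulVec
            fun r => starRingEnd ℂ (Φ (-n) t r)) i))
    (hg : ∀ (n : ℤ) (t : ℝ), g n t =
      Matrix.det (Matrix.of fun i j : Fin (2 * m + 2) =>
        if (j : ℕ) < m + 2 then
          ((A ^ (-(m : ℤ) + 2 * ((j : ℕ) : ℤ))).mulVec (Φ n t)) i
        else
          ((A ^ ((m : ℤ) - 2 * ((((j : ℕ) - (m + 2) : ℕ)) : ℤ)) * T).mulVec
            fun r => starRingEnd ℂ (Φ (-n) t r)) i))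
    (hh : ∀ (n : ℤ) (t : ℝ), h n t =
      -Matrix.det (Matrix.of fun i j : Fin (2 * m + 2) =>
        if (j : ℕ) < m then
          ((A ^ (-(m : ℤ) + 2 * ((j : ℕ) : ℤ))).mulVec (Φ n t)) i
        else
          ((A ^ ((m : ℤ) - 2 * ((((j : ℕ) - m : ℕ)) : ℤ)) * T).mulVec
            fun r => starRingEnd ℂ (Φ (-n) t r)) i)) :
    ∀ (n : ℤ) (t : ℝ),
      f n t = (δ * (A.det * starRingEnd ℂ A.det)⁻¹) ^ (m + 1) * T.det *
          starRingEnd ℂ (f (-n) t) ∧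
      h n t = δ ^ m * ((A.det * starRingEnd ℂ A.det) ^ (m + 1))⁻¹ * T.det *
          starRingEnd ℂ (g (-n) t) := by
  intro n t
  -- basic facts
  have hAd : IsUnit A.det := (Matrix.isUnit_iff_isUnit_det A).mp hA
  have hTd : IsUnit T.det := (Matrix.isUnit_iff_isUnit_det T).mp hTu
  have hAd0 : A.det ≠ 0 := hAd.ne_zero
  have hTd0 : T.det ≠ 0 := hTd.ne_zero
  have hmapdet : (A.map (starRingEnd ℂ)).det = starRingEnd ℂ A.det := by
    rw [RingHom.map_det]; rfl
  have hAcd : IsUnit (A.map (starRingEnd ℂ)).det := by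
    rw [hmapdet]; exact hAd.map (starRingEnd ℂ)
  have hreal : starRingEnd ℂ A.det = A.det := by
    have h1 := congrArg Matrix.det hAT
    rw [Matrix.det_mul, Matrix.det_mul, hmapdet, mul_comm T.det] at h1
    exact (mul_right_cancel₀ hTd0 h1).symm
  have hδ2 : δ * δ = 1 := by rcases hδ with h1 | h1 <;> rw [h1] <;> norm_num
  have hXne : A.det * A.det ≠ 0 := mul_ne_zero hAd0 hAd0
  -- commutation
  have hsemi : ∀ k : ℤ, T * (A ^ k).map (starRingEnd ℂ) = A ^ k * T := by
    intro k
    rw [map_zpow_star A hAd k]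
    exact Matrix.SemiconjBy.zpow_right hAcd hAd hAT.symm k
  have hstar : ∀ (M : Matrix (Fin (2 * m + 2)) (Fin (2 * m + 2)) ℂ) (v : Fin (2 * m + 2) → ℂ),
      (fun i => starRingEnd ℂ ((M.mulVec v) i)) =
        (M.map (starRingEnd ℂ)).mulVec (fun r => starRingEnd ℂ (v r)) := by
    intro M v; funext i
    simp [Matrix.mulVec, dotProduct, map_sum, Matrix.map_apply]
  have hTTc : ∀ k : ℤ, T * ((A ^ k * T).map (starRingEnd ℂ)) =
      (-δ * (A.det * starRingEnd ℂ A.det)) • A ^ k := by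
    intro k
    rw [Matrix.map_mul, ← Matrix.mul_assoc, hsemi k, Matrix.mul_assoc, hTT,
      Matrix.mul_smul, Matrix.mul_one]
  -- column computations
  have vecA' : ∀ (k : ℤ) (v : Fin (2 * m + 2) → ℂ) (i : Fin (2 * m + 2)),
      (∑ x, T i x * starRingEnd ℂ (((A ^ k).mulVec v) x)) =
        ((A ^ k * T).mulVec fun r => starRingEnd ℂ (v r)) i := by
    intro k v i
    calc (∑ x, T i x * starRingEnd ℂ (((A ^ k).mulVec v) x))
        = (T.mulVec fun x => starRingEnd ℂ (((A ^ k).mulVec v) x)) i := by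
          simp [Matrix.mulVec, dotProduct]
      _ = ((A ^ k * T).mulVec fun r => starRingEnd ℂ (v r)) i := by
          rw [hstar (A ^ k) v, Matrix.mulVec_mulVec, hsemi k]
  have vecB' : ∀ (k : ℤ) (v : Fin (2 * m + 2) → ℂ) (i : Fin (2 * m + 2)),
      (∑ x, T i x * starRingEnd ℂ (((A ^ k * T).mulVec fun r => starRingEnd ℂ (v r)) x)) =
        -δ * (A.det * starRingEnd ℂ A.det) * (((A ^ k).mulVec v) i) := by
    intro k v i
    have hdbl : (fun r => starRingEnd ℂ (starRingEnd ℂ (v r))) = v := by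
      funext r; exact Complex.conj_conj (v r)
    calc (∑ x, T i x * starRingEnd ℂ (((A ^ k * T).mulVec fun r => starRingEnd ℂ (v r)) x))
        = (T.mulVec fun x => starRingEnd ℂ
            (((A ^ k * T).mulVec fun r => starRingEnd ℂ (v r)) x)) i := by
          simp [Matrix.mulVec, dotProduct]
      _ = ((T * ((A ^ k * T).map (starRingEnd ℂ))).mulVec v) i := by
          rw [hstar (A ^ k * T) (fun r => starRingEnd ℂ (v r)), Matrix.mulVec_mulVec, hdbl]
      _ = (((-δ * (A.det * starRingEnd ℂ A.det)) • A ^ k).mulVec v) i := by rw [hTTc k]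
      _ = -δ * (A.det * starRingEnd ℂ A.det) * (((A ^ k).mulVec v) i) := by
          rw [Matrix.smul_mulVec]; simp
  have vecA2' : ∀ (k : ℤ) (v : Fin (2 * m + 2) → ℂ) (i : Fin (2 * m + 2)),
      (∑ x, (A ^ (-2 : ℤ) * T) i x * starRingEnd ℂ (((A ^ k).mulVec v) x)) =
        ((A ^ (-2 + k) * T).mulVec fun r => starRingEnd ℂ (v r)) i := by
    intro k v i
    have hcomp : (A ^ (-2 : ℤ) * T) * (A ^ k).map (starRingEnd ℂ) = A ^ (-2 + k) * T := by
      rw [Matrix.mul_assoc, hsemi k, ← Matrix.mul_assoc, ← Matrix.zpow_add hAd]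
    calc (∑ x, (A ^ (-2 : ℤ) * T) i x * starRingEnd ℂ (((A ^ k).mulVec v) x))
        = ((A ^ (-2 : ℤ) * T).mulVec fun x => starRingEnd ℂ (((A ^ k).mulVec v) x)) i := by
          simp [Matrix.mulVec, dotProduct]
      _ = ((A ^ (-2 + k) * T).mulVec fun r => starRingEnd ℂ (v r)) i := by
          rw [hstar (A ^ k) v, Matrix.mulVec_mulVec, hcomp]
  have vecB2' : ∀ (k : ℤ) (v : Fin (2 * m + 2) → ℂ) (i : Fin (2 * m + 2)),
      (∑ x, (A ^ (-2 : ℤ) * T) i x *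
          starRingEnd ℂ (((A ^ k * T).mulVec fun r => starRingEnd ℂ (v r)) x)) =
        -δ * (A.det * starRingEnd ℂ A.det) * (((A ^ (-2 + k)).mulVec v) i) := by
    intro k v i
    have hdbl : (fun r => starRingEnd ℂ (starRingEnd ℂ (v r))) = v := by
      funext r; exact Complex.conj_conj (v r)
    have hcomp : (A ^ (-2 : ℤ) * T) * ((A ^ k * T).map (starRingEnd ℂ)) =
        (-δ * (A.det * starRingEnd ℂ A.det)) • A ^ (-2 + k) := by
      rw [Matrix.mul_assoc, hTTc k, Matrix.mul_smul, ← Matrix.zpow_add hAd]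
    calc (∑ x, (A ^ (-2 : ℤ) * T) i x *
          starRingEnd ℂ (((A ^ k * T).mulVec fun r => starRingEnd ℂ (v r)) x))
        = ((A ^ (-2 : ℤ) * T).mulVec fun x => starRingEnd ℂ
            (((A ^ k * T).mulVec fun r => starRingEnd ℂ (v r)) x)) i := by
          simp [Matrix.mulVec, dotProduct]
      _ = (((-δ * (A.det * starRingEnd ℂ A.det)) • A ^ (-2 + k)).mulVec v) i := by
          rw [hstar (A ^ k * T) (fun r => starRingEnd ℂ (v r)), Matrix.mulVec_mulVec, hdbl,
            hcomp]
      _ = -δ * (A.det * starRingEnd ℂ A.det) * (((A ^ (-2 + k)).mulVec v) i) := by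
          rw [Matrix.smul_mulVec]; simp
  -- sign of the reversal
  have hsign : Equiv.Perm.sign (Fin.revPerm : Equiv.Perm (Fin (2 * m + 2))) =
      (-1 : ℤˣ) ^ (m + 1) := by
    rw [sign_revPerm_div2]
    congr 1
    omega
  -- ===================== first identity =====================
  have key1 : T * ((Matrix.of fun i j : Fin (2 * m + 2) =>
        if (j : ℕ) < m + 1 then
          ((A ^ (-(m : ℤ) + 2 * ((j : ℕ) : ℤ))).mulVec (Φ (-n) t)) i
        else
          ((A ^ ((m : ℤ) - 2 * ((((j : ℕ) - (m + 1) : ℕ)) : ℤ)) * T).mulVec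
            fun r => starRingEnd ℂ (Φ (- -n) t r)) i).map (starRingEnd ℂ)) =
      ((Matrix.of fun i j : Fin (2 * m + 2) =>
        if (j : ℕ) < m + 1 then
          ((A ^ (-(m : ℤ) + 2 * ((j : ℕ) : ℤ))).mulVec (Φ n t)) i
        else
          ((A ^ ((m : ℤ) - 2 * ((((j : ℕ) - (m + 1) : ℕ)) : ℤ)) * T).mulVec
            fun r => starRingEnd ℂ (Φ (-n) t r)) i).submatrix id Fin.revPerm) *
        Matrix.diagonal (fun j : Fin (2 * m + 2) =>
          if (j : ℕ) < m + 1 then (1 : ℂ) else -δ * (A.det * starRingEnd ℂ A.det)) := by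
    ext i j
    rw [Matrix.mul_apply]
    simp only [Matrix.map_apply, Matrix.of_apply, Matrix.mul_diagonal, Matrix.submatrix_apply,
      id_eq, Fin.revPerm_apply, neg_neg]
    have hrev : ((Fin.rev j : Fin (2 * m + 2)) : ℕ) = 2 * m + 1 - (j : ℕ) := by
      rw [Fin.val_rev]; omega
    have hjlt : (j : ℕ) < 2 * m + 2 := j.isLt
    by_cases hj : (j : ℕ) < m + 1
    · have hnrev : ¬ ((Fin.rev j : Fin (2 * m + 2)) : ℕ) < m + 1 := by rw [hrev]; omega
      simp only [if_pos hj, if_neg hnrev, mul_one]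
      rw [vecA' (-(m : ℤ) + 2 * ((j : ℕ) : ℤ)) (Φ (-n) t) i]
      have hE : (m : ℤ) - 2 * ((((Fin.rev j : Fin (2 * m + 2)) : ℕ) - (m + 1) : ℕ) : ℤ) =
          -(m : ℤ) + 2 * ((j : ℕ) : ℤ) := by
        rw [hrev]; omega
      rw [hE]
    · have hprev : ((Fin.rev j : Fin (2 * m + 2)) : ℕ) < m + 1 := by rw [hrev]; omega
      simp only [if_neg hj, if_pos hprev]
      rw [vecB' ((m : ℤ) - 2 * ((((j : ℕ) - (m + 1) : ℕ)) : ℤ)) (Φ n t) i, mul_comm]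
      have hE : -(m : ℤ) + 2 * (((Fin.rev j : Fin (2 * m + 2)) : ℕ) : ℤ) =
          (m : ℤ) - 2 * ((((j : ℕ) - (m + 1) : ℕ)) : ℤ) := by
        rw [hrev]; omega
      rw [hE]
  have E1 := congrArg Matrix.det key1
  rw [Matrix.det_mul, Matrix.det_mul, Matrix.det_permute', Matrix.det_diagonal,
    prod_ite_pow, hsign, ← RingHom.mapMatrix_apply, ← RingHom.map_det] at E1
  rw [show (2 * m + 2) - (m + 1) = m + 1 by omega] at E1
  rw [← hf n t] at E1
  have hfneg := hf (-n) t
  rw [← hfneg] at E1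
  push_cast at E1
  rw [hreal] at E1
  -- ===================== second identity =====================
  have key2 : (A ^ (-2 : ℤ) * T) * ((Matrix.of fun i j : Fin (2 * m + 2) =>
        if (j : ℕ) < m + 2 then
          ((A ^ (-(m : ℤ) + 2 * ((j : ℕ) : ℤ))).mulVec (Φ (-n) t)) i
        else
          ((A ^ ((m : ℤ) - 2 * ((((j : ℕ) - (m + 2) : ℕ)) : ℤ)) * T).mulVec
            fun r => starRingEnd ℂ (Φ (- -n) t r)) i).map (starRingEnd ℂ)) =
      ((Matrix.of fun i j : Fin (2 * m + 2) =>
        if (j : ℕ) < m then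
          ((A ^ (-(m : ℤ) + 2 * ((j : ℕ) : ℤ))).mulVec (Φ n t)) i
        else
          ((A ^ ((m : ℤ) - 2 * ((((j : ℕ) - m : ℕ)) : ℤ)) * T).mulVec
            fun r => starRingEnd ℂ (Φ (-n) t r)) i).submatrix id Fin.revPerm) *
        Matrix.diagonal (fun j : Fin (2 * m + 2) =>
          if (j : ℕ) < m + 2 then (1 : ℂ) else -δ * (A.det * starRingEnd ℂ A.det)) := by
    ext i j
    rw [Matrix.mul_apply]
    simp only [Matrix.map_apply, Matrix.of_apply, Matrix.mul_diagonal, Matrix.submatrix_apply,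
      id_eq, Fin.revPerm_apply, neg_neg]
    have hrev : ((Fin.rev j : Fin (2 * m + 2)) : ℕ) = 2 * m + 1 - (j : ℕ) := by
      rw [Fin.val_rev]; omega
    have hjlt : (j : ℕ) < 2 * m + 2 := j.isLt
    by_cases hj : (j : ℕ) < m + 2
    · have hnrev : ¬ ((Fin.rev j : Fin (2 * m + 2)) : ℕ) < m := by rw [hrev]; omega
      simp only [if_pos hj, if_neg hnrev, mul_one]
      rw [vecA2' (-(m : ℤ) + 2 * ((j : ℕ) : ℤ)) (Φ (-n) t) i]
      have hE : (m : ℤ) - 2 * ((((Fin.rev j : Fin (2 * m + 2)) : ℕ) - m : ℕ) : ℤ) =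
          -2 + (-(m : ℤ) + 2 * ((j : ℕ) : ℤ)) := by
        rw [hrev]; omega
      rw [hE]
    · have hprev : ((Fin.rev j : Fin (2 * m + 2)) : ℕ) < m := by rw [hrev]; omega
      simp only [if_neg hj, if_pos hprev]
      rw [vecB2' ((m : ℤ) - 2 * ((((j : ℕ) - (m + 2) : ℕ)) : ℤ)) (Φ n t) i, mul_comm]
      have hE : -(m : ℤ) + 2 * (((Fin.rev j : Fin (2 * m + 2)) : ℕ) : ℤ) =
          -2 + ((m : ℤ) - 2 * ((((j : ℕ) - (m + 2) : ℕ)) : ℤ)) := by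
        rw [hrev]; omega
      rw [hE]
  have hdetA2 : (A ^ (-2 : ℤ) * T).det = (A.det ^ 2)⁻¹ * T.det := by
    rw [Matrix.det_mul]
    congr 1
    rw [show (-2 : ℤ) = -((2 : ℕ) : ℤ) by norm_num, Matrix.zpow_neg_natCast,
      Matrix.det_nonsing_inv, Matrix.det_pow, Ring.inverse_eq_inv]
  have E2 := congrArg Matrix.det key2
  rw [Matrix.det_mul, hdetA2, Matrix.det_mul, Matrix.det_permute', Matrix.det_diagonal,
    prod_ite_pow, hsign, ← RingHom.mapMatrix_apply, ← RingHom.map_det] at E2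
  rw [show (2 * m + 2) - (m + 2) = m by omega] at E2
  have hgneg := hg (-n) t
  rw [← hgneg] at E2
  have hhdet : Matrix.det (Matrix.of fun i j : Fin (2 * m + 2) =>
        if (j : ℕ) < m then
          ((A ^ (-(m : ℤ) + 2 * ((j : ℕ) : ℤ))).mulVec (Φ n t)) i
        else
          ((A ^ ((m : ℤ) - 2 * ((((j : ℕ) - m : ℕ)) : ℤ)) * T).mulVec
            fun r => starRingEnd ℂ (Φ (-n) t r)) i) = -(h n t) := by
    rw [hh n t, neg_neg]
  rw [hhdet] at E2
  push_cast at E2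
  rw [hreal] at E2
  -- ===================== conclude =====================
  have hm22 : (-1 : ℂ) ^ (m * 2 + 2) = 1 := by
    rw [pow_add, pow_mul']; norm_num
  constructor
  · rw [hreal, mul_assoc]
    have step1f : (-1 : ℂ) ^ (m + 1) * f n t * (-δ * (A.det * A.det)) ^ (m + 1) =
        f n t * (δ * (A.det * A.det)) ^ (m + 1) * (-1 : ℂ) ^ (m * 2 + 2) := by
      rw [show (-δ * (A.det * A.det)) = (-1) * (δ * (A.det * A.det)) by ring, mul_pow]
      ring
    have E1' : T.det * starRingEnd ℂ (f (-n) t) =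
        f n t * (δ * (A.det * A.det)) ^ (m + 1) := by
      rw [E1, step1f, hm22, mul_one]
    rw [E1']
    have expand1 : ∀ u : ℂ,
        (δ * (A.det * A.det)⁻¹) ^ (m + 1) * (u * (δ * (A.det * A.det)) ^ (m + 1)) =
        (δ * δ) ^ (m + 1) * ((A.det * A.det) * (A.det * A.det)⁻¹) ^ (m + 1) * u := by
      intro u; ring
    rw [expand1, hδ2, mul_inv_cancel₀ hXne]; norm_num
  · rw [hreal, mul_assoc]
    have step1h : (-1 : ℂ) ^ (m + 1) * -(h n t) * (-δ * (A.det * A.det)) ^ m =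
        h n t * (δ * (A.det * A.det)) ^ m * (-1 : ℂ) ^ (m * 2 + 2) := by
      rw [show (-δ * (A.det * A.det)) = (-1) * (δ * (A.det * A.det)) by ring, mul_pow]
      ring
    have E2b : (A.det ^ 2)⁻¹ * T.det * starRingEnd ℂ (g (-n) t) =
        h n t * (δ * (A.det * A.det)) ^ m := by
      rw [E2, step1h, hm22, mul_one]
    have h2ne : (A.det ^ 2 : ℂ) ≠ 0 := pow_ne_zero _ hAd0
    have E2c : T.det * starRingEnd ℂ (g (-n) t) =
        A.det ^ 2 * (h n t * (δ * (A.det * A.det)) ^ m) := by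
      have hc := congrArg (fun z => A.det ^ 2 * z) E2b
      rw [show A.det ^ 2 * ((A.det ^ 2)⁻¹ * T.det * starRingEnd ℂ (g (-n) t)) =
          (A.det ^ 2 * (A.det ^ 2)⁻¹) * (T.det * starRingEnd ℂ (g (-n) t)) by ring,
        mul_inv_cancel₀ h2ne, one_mul] at hc
      exact hc
    rw [E2c]
    have expand2 : ∀ u : ℂ,
        δ ^ m * ((A.det * A.det) ^ (m + 1))⁻¹ *
          (A.det ^ 2 * (u * (δ * (A.det * A.det)) ^ m)) =
        (δ * δ) ^ m * ((A.det * A.det) ^ (m + 1) * ((A.det * A.det) ^ (m + 1))⁻¹) * u := by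
      intro u; ring
    rw [expand2, hδ2, mul_inv_cancel₀ (pow_ne_zero _ hXne)]; norm_num
end

section
/- Let δ ∈ {1,−1}, let T be a (2m+2) × (2m+2) complex matrix with T² = δ·I, and let Φ : ℤ × ℝ → ℂ^(2m+2) be any function. Define f(n,t) = det of the matrix with columns Φ(n+2j,t) for j = 0,…,m followed by T·Φ(n+2j,−t) for j = 0,…,m; g(n,t) = det of the matrix with columns Φ(n+2j,t) for j = 0,…,m+1 followed by T·Φ(n+2j,−t) for j = 0,…,m−1; and h(n,t) = −det of the matrix with columns Φ(n+2j,t) for j = 0,…,m−1 followed by T·Φ(n+2j,−t) for j = 0,…,m+1. Then f(n,t) = (−δ)^(m+1)·det(T)·f(n,−t) and h(n,t) = −(−δ)^m·det(T)·g(n,−t) for all (n,t). -/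
open Matrix

open Fin.NatCast Fin.CommRing in
private lemma finRotate_pow_apply (N k : ℕ) (j : Fin (N + 1)) :
    ((finRotate (N + 1)) ^ k) j = j + (k : Fin (N + 1)):= by
  induction k with
  | zero => simp
  | succ k ih =>
    rw [pow_succ', Equiv.Perm.mul_apply, finRotate_succ_apply, ih]
    push_cast
    ring

private lemma prod_ite_range (a : ℕ) (δ : ℂ) :
    ∀ b : ℕ, (∏ i ∈ Finset.range (a + b), (if i < a then (1:ℂ) else δ)) = δ ^ b := by
  intro b
  induction b with
  | zero =>
    rw [pow_zero]
    apply Finset.prod_eq_one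
    intro i hi
    simp only [Finset.mem_range] at hi
    rw [if_pos (by omega : i < a)]
  | succ b ih =>
    rw [show a + (b+1) = (a+b)+1 by ring, Finset.prod_range_succ, ih,
      if_neg (by omega), pow_succ]

private lemma core (m : ℕ) (δ : ℂ) (hδ : δ = 1 ∨ δ = -1)
    (T : Matrix (Fin (2 * m + 2)) (Fin (2 * m + 2)) ℂ)
    (hTT : T ^ 2 = δ • (1 : Matrix (Fin (2 * m + 2)) (Fin (2 * m + 2)) ℂ))
    (Φ : ℤ → ℝ → Fin (2 * m + 2) → ℂ) (n : ℤ) (t : ℝ) (p q : ℕ)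
    (hpq : p + q = 2 * m + 2) :
    Matrix.det (Matrix.of fun i j : Fin (2 * m + 2) =>
        if (j : ℕ) < p then Φ (n + 2 * ((j : ℕ) : ℤ)) t i
        else (T.mulVec (Φ (n + 2 * ((((j : ℕ) - p : ℕ)) : ℤ)) (-t))) i)
      = (-δ) ^ q * T.det *
      Matrix.det (Matrix.of fun i j : Fin (2 * m + 2) =>
        if (j : ℕ) < q then Φ (n + 2 * ((j : ℕ) : ℤ)) (-t) i
        else (T.mulVec (Φ (n + 2 * ((((j : ℕ) - q : ℕ)) : ℤ)) t)) i) := by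
  have hδ2 : δ ^ 2 = 1 := by rcases hδ with h | h <;> rw [h] <;> norm_num
  set A : Matrix (Fin (2 * m + 2)) (Fin (2 * m + 2)) ℂ :=
    Matrix.of fun i j : Fin (2 * m + 2) =>
        if (j : ℕ) < p then Φ (n + 2 * ((j : ℕ) : ℤ)) t i
        else (T.mulVec (Φ (n + 2 * ((((j : ℕ) - p : ℕ)) : ℤ)) (-t))) i with hA
  set B : Matrix (Fin (2 * m + 2)) (Fin (2 * m + 2)) ℂ :=
    Matrix.of fun i j : Fin (2 * m + 2) =>
        if (j : ℕ) < q then Φ (n + 2 * ((j : ℕ) : ℤ)) (-t) i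
        else (T.mulVec (Φ (n + 2 * ((((j : ℕ) - q : ℕ)) : ℤ)) t)) i with hB
  set ρ : Equiv.Perm (Fin (2 * m + 2)) := (finRotate (2 * m + 1 + 1)) ^ q with hρdef
  have hρ : ∀ j : Fin (2 * m + 2), ((ρ j : ℕ)) = ((j : ℕ) + q) % (2 * m + 2) := by
    intro j
    rw [hρdef, finRotate_pow_apply (2 * m + 1) q j, Fin.val_add, Fin.val_natCast]
    conv_rhs => rw [Nat.add_mod, Nat.mod_eq_of_lt j.isLt]
  have hTTv : ∀ v : Fin (2 * m + 2) → ℂ, T.mulVec (T.mulVec v) = δ • v := by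
    intro v
    rw [Matrix.mulVec_mulVec, ← pow_two, hTT, Matrix.smul_mulVec,
      Matrix.one_mulVec]
  have key : T * A = (B.submatrix id ρ) *
      Matrix.diagonal (fun j : Fin (2 * m + 2) => if (j : ℕ) < p then (1:ℂ) else δ) := by
    ext i j
    rw [Matrix.mul_diagonal, Matrix.submatrix_apply, id]
    by_cases hj : (j : ℕ) < p
    · rw [if_pos hj, mul_one]
      have hρj : ((ρ j : ℕ)) = (j : ℕ) + q := by
        rw [hρ j, Nat.mod_eq_of_lt (by omega)]
      have hcol : (fun k => A k j) = Φ (n + 2 * ((j : ℕ) : ℤ)) t := by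
        funext k; simp only [hA, Matrix.of_apply, if_pos hj]
      have : (T * A) i j = T.mulVec (fun k => A k j) i := by
        simp [Matrix.mul_apply, Matrix.mulVec, dotProduct]
      rw [this, hcol, hB]
      simp only [Matrix.of_apply, hρj, if_neg (by omega : ¬ ((j : ℕ) + q < q)),
        Nat.add_sub_cancel]
    · rw [if_neg hj]
      have hρj : ((ρ j : ℕ)) = (j : ℕ) - p := by
        rw [hρ j, show (j : ℕ) + q = ((j : ℕ) + q - (2 * m + 2)) + (2 * m + 2) by omega,
          Nat.add_mod_right, Nat.mod_eq_of_lt (by omega)]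
        omega
      have hcol : (fun k => A k j) = T.mulVec (Φ (n + 2 * ((((j : ℕ) - p : ℕ)) : ℤ)) (-t)) := by
        funext k; simp only [hA, Matrix.of_apply, if_neg hj]
      have h1 : (T * A) i j = T.mulVec (fun k => A k j) i := by
        simp [Matrix.mul_apply, Matrix.mulVec, dotProduct]
      rw [h1, hcol, hTTv, hB]
      have hlt : ((j : ℕ) - p) < q := by omega
      simp only [Matrix.of_apply, hρj, if_pos hlt, Pi.smul_apply, smul_eq_mul]
      ring
  have hdet := congrArg Matrix.det key
  rw [Matrix.det_mul, Matrix.det_mul, Matrix.det_permute', Matrix.det_diagonal] at hdet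
  have hsign : Equiv.Perm.sign ρ = (-1) ^ q := by
    rw [hρdef, map_pow, sign_finRotate, Odd.neg_one_pow ⟨m, by omega⟩]
  have hprod : (∏ j : Fin (2 * m + 2), (if (j : ℕ) < p then (1:ℂ) else δ)) = δ ^ q := by
    rw [Fin.prod_univ_eq_prod_range (fun i => if i < p then (1:ℂ) else δ) (2 * m + 2),
      show 2 * m + 2 = p + q from hpq.symm]
    exact prod_ite_range p δ q
  rw [hsign, hprod] at hdet
  have detT2 : T.det * T.det = 1 := by
    rw [← Matrix.det_mul, ← pow_two, hTT, Matrix.det_smul, Matrix.det_one, mul_one,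
      Fintype.card_fin, show 2 * m + 2 = 2 * (m + 1) by ring, pow_mul, hδ2, one_pow]
  have push : ((((-1 : ℤˣ) ^ q : ℤˣ) : ℤ) : ℂ) = (-1 : ℂ) ^ q := by push_cast; ring
  rw [push] at hdet
  have : A.det = T.det * (T.det * A.det) := by rw [← mul_assoc, detT2, one_mul]
  rw [this, hdet, neg_pow δ q]
  ring

/-- reverse-time reduction relations between the double Casoratians
`f`, `g`, `h` built from `Φ(n+2j,t)` and `T·Φ(n+2j,−t)`, when `T² = δI`. -/
theorem reverse_time_casoratian_relations (m : ℕ) (hm : 1 ≤ m)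
    (δ : ℂ) (hδ : δ = 1 ∨ δ = -1)
    (T : Matrix (Fin (2 * m + 2)) (Fin (2 * m + 2)) ℂ)
    (hTT : T ^ 2 = δ • (1 : Matrix (Fin (2 * m + 2)) (Fin (2 * m + 2)) ℂ))
    (Φ : ℤ → ℝ → Fin (2 * m + 2) → ℂ)
    (f g h : ℤ → ℝ → ℂ)
    (hf : ∀ (n : ℤ) (t : ℝ), f n t =
      Matrix.det (Matrix.of fun i j : Fin (2 * m + 2) =>
        if (j : ℕ) < m + 1 then Φ (n + 2 * ((j : ℕ) : ℤ)) t i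
        else (T.mulVec (Φ (n + 2 * ((((j : ℕ) - (m + 1) : ℕ)) : ℤ)) (-t))) i))
    (hg : ∀ (n : ℤ) (t : ℝ), g n t =
      Matrix.det (Matrix.of fun i j : Fin (2 * m + 2) =>
        if (j : ℕ) < m + 2 then Φ (n + 2 * ((j : ℕ) : ℤ)) t i
        else (T.mulVec (Φ (n + 2 * ((((j : ℕ) - (m + 2) : ℕ)) : ℤ)) (-t))) i))
    (hh : ∀ (n : ℤ) (t : ℝ), h n t =
      -Matrix.det (Matrix.of fun i j : Fin (2 * m + 2) =>
        if (j : ℕ) < m then Φ (n + 2 * ((j : ℕ) : ℤ)) t i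
        else (T.mulVec (Φ (n + 2 * ((((j : ℕ) - m : ℕ)) : ℤ)) (-t))) i)) :
    ∀ (n : ℤ) (t : ℝ),
      f n t = (-δ) ^ (m + 1) * T.det * f n (-t) ∧
      h n t = -(-δ) ^ m * T.det * g n (-t) := by
  have hδ2 : δ ^ 2 = 1 := by rcases hδ with h' | h' <;> rw [h'] <;> norm_num
  intro n t
  constructor
  · rw [hf n t, hf n (-t)]
    simp only [neg_neg]
    exact core m δ hδ T hTT Φ n t (m + 1) (m + 1) (by ring)
  · rw [hh n t, hg n (-t)]
    simp only [neg_neg]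
    have hc := core m δ hδ T hTT Φ n t m (m + 2) (by ring)
    rw [hc, show (-δ) ^ (m + 2) = (-δ) ^ m by rw [pow_add, neg_sq, hδ2, mul_one]]
    ring
end

section
/- Let δ ∈ {1,−1}, let A and T be invertible (2m+2) × (2m+2) complex matrices with A·T = T·A and T² = −δ·(det A)²·I, and let Φ : ℤ × ℝ → ℂ^(2m+2) be any function. Define f(n,t) = det of the matrix with columns A^(−m+2j)·Φ(n,t) for j = 0,…,m followed by A^(m−2j)·T·Φ(−n,−t) for j = 0,…,m; g(n,t) = det of the matrix with columns A^(−m+2j)·Φ(n,t) for j = 0,…,m+1 followed by A^(m−2j)·T·Φ(−n,−t) for j = 0,…,m−1; and h(n,t) = −det of the matrix with columns A^(−m+2j)·Φ(n,t) for j = 0,…,m−1 followed by A^(m−2j)·T·Φ(−n,−t) for j = 0,…,m+1. Then f(n,t) = (δ·(det A)^(−2))^(m+1)·det(T)·f(−n,−t) and h(n,t) = δ^m·(det A)^(−2(m+1))·det(T)·g(−n,−t) for all (n,t). -/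
open Matrix


private def midEquiv (n : ℕ) : Fin n ≃ {x : Fin (n+2) // (x:ℕ) ≠ 0 ∧ (x:ℕ) ≠ n+1} where
  toFun i := ⟨⟨(i:ℕ)+1, by omega⟩, by have hi := i.isLt; constructor <;> simp <;> omega⟩
  invFun x := ⟨(x:ℕ)-1, by obtain ⟨⟨xv,hx⟩,h1,h2⟩ := x; simp at h1 h2 ⊢; omega⟩
  left_inv i := by ext; simp
  right_inv x := by obtain ⟨⟨xv,hx⟩,h1,h2⟩ := x; ext; simp at h1 h2 ⊢; omega

private lemma rev_eq (n : ℕ) : (Fin.revPerm : Equiv.Perm (Fin (n+2))) =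
    Equiv.swap 0 (Fin.last (n+1)) * (Fin.revPerm : Equiv.Perm (Fin n)).extendDomain (midEquiv n) := by
  ext x
  rw [Equiv.Perm.mul_apply]
  by_cases hx : (x:ℕ) ≠ 0 ∧ (x:ℕ) ≠ n+1
  · rw [Equiv.Perm.extendDomain_apply_subtype _ (midEquiv n) hx]
    have hy : (((midEquiv n) (Fin.revPerm ((midEquiv n).symm ⟨x, hx⟩)) : Fin (n+2)) : ℕ)
        = (n - (((x:ℕ) - 1) + 1)) + 1 := rfl
    have hxlt : (x:ℕ) < n + 2 := x.isLt
    rw [Equiv.swap_apply_of_ne_of_ne]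
    · rw [hy]
      simp only [Fin.revPerm_apply, Fin.val_rev]
      omega
    · intro h; apply_fun Fin.val at h; rw [hy] at h; simp only [Fin.val_zero] at h; omega
    · intro h; apply_fun Fin.val at h; rw [hy] at h; simp only [Fin.val_last] at h; omega
  · rw [Equiv.Perm.extendDomain_apply_not_subtype _ (midEquiv n) hx]
    push_neg at hx
    by_cases h0 : (x:ℕ) = 0
    · have : x = 0 := Fin.ext (by simpa using h0)
      subst this
      rw [Equiv.swap_apply_left]
      simp [Fin.revPerm_apply, Fin.val_rev]
    · have : x = Fin.last (n+1) := Fin.ext (by simp only [Fin.val_last]; have := hx h0; have := x.isLt; omega)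
      subst this
      rw [Equiv.swap_apply_right]
      simp [Fin.revPerm_apply, Fin.val_rev]

private lemma sign_rev_step (n : ℕ) :
    Equiv.Perm.sign (Fin.revPerm : Equiv.Perm (Fin (n+2))) =
      -Equiv.Perm.sign (Fin.revPerm : Equiv.Perm (Fin n)) := by
  rw [rev_eq n, _root_.map_mul, Equiv.Perm.sign_swap (by simp [Fin.ext_iff]),
    Equiv.Perm.sign_extendDomain, neg_one_mul]

private lemma sign_rev_even (m : ℕ) :
    Equiv.Perm.sign (Fin.revPerm : Equiv.Perm (Fin (2*m+2))) = (-1)^(m+1) := by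
  induction m with
  | zero =>
    rw [show (Fin.revPerm : Equiv.Perm (Fin (2*0+2))) = Equiv.swap 0 1 from by decide,
      Equiv.Perm.sign_swap (by decide)]
    simp
  | succ k ih =>
    rw [show 2*(k+1)+2 = (2*k+2)+2 from by ring, sign_rev_step, ih]
    simp [pow_succ]


private lemma aux_step (m a b : ℕ) (hab : a + b = 2*m+2) (δ : ℂ)
    (A T : Matrix (Fin (2*m+2)) (Fin (2*m+2)) ℂ) (hA : IsUnit A.det)
    (hAT : A * T = T * A)
    (hTT : T ^ 2 = (-δ * A.det ^ 2) • (1 : Matrix (Fin (2*m+2)) (Fin (2*m+2)) ℂ))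
    (u v : Fin (2*m+2) → ℂ) :
    (T * A ^ ((a:ℤ) - (b:ℤ))).det *
      Matrix.det (Matrix.of fun i j : Fin (2 * m + 2) =>
        if (j : ℕ) < b then
          ((A ^ (-(m : ℤ) + 2 * ((j : ℕ) : ℤ))).mulVec v) i
        else
          ((A ^ ((m : ℤ) - 2 * ((((j : ℕ) - b : ℕ)) : ℤ)) * T).mulVec u) i) =
    (-δ * A.det ^ 2) ^ a * (-1 : ℂ) ^ (m + 1) *
      Matrix.det (Matrix.of fun i j : Fin (2 * m + 2) =>
        if (j : ℕ) < a then
          ((A ^ (-(m : ℤ) + 2 * ((j : ℕ) : ℤ))).mulVec u) i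
        else
          ((A ^ ((m : ℤ) - 2 * ((((j : ℕ) - a : ℕ)) : ℤ)) * T).mulVec v) i) := by
  have hc : Commute T A := hAT.symm
  set X : Matrix (Fin (2*m+2)) (Fin (2*m+2)) ℂ := Matrix.of fun i j : Fin (2 * m + 2) =>
        if (j : ℕ) < a then
          ((A ^ (-(m : ℤ) + 2 * ((j : ℕ) : ℤ))).mulVec u) i
        else
          ((A ^ ((m : ℤ) - 2 * ((((j : ℕ) - a : ℕ)) : ℤ)) * T).mulVec v) i with hX
  set Y : Matrix (Fin (2*m+2)) (Fin (2*m+2)) ℂ := Matrix.of fun i j : Fin (2 * m + 2) =>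
        if (j : ℕ) < b then
          ((A ^ (-(m : ℤ) + 2 * ((j : ℕ) : ℤ))).mulVec v) i
        else
          ((A ^ ((m : ℤ) - 2 * ((((j : ℕ) - b : ℕ)) : ℤ)) * T).mulVec u) i with hY
  have key : (T * A ^ ((a:ℤ) - (b:ℤ))) * Y =
      Matrix.of (fun i j : Fin (2*m+2) => (if (j : ℕ) < b then (1:ℂ) else -δ * A.det ^ 2) *
        (X.submatrix id Fin.revPerm) i j) := by
    ext i j
    have hj2 : (j : ℕ) < 2*m+2 := j.isLt
    rw [Matrix.mul_apply, Matrix.of_apply]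
    by_cases hj : (j : ℕ) < b
    · have hrev : ¬ ((Fin.rev j : ℕ) < a) := by simp only [Fin.val_rev]; omega
      have hmat : (T * A ^ ((a:ℤ)-(b:ℤ))) * A ^ (-(m : ℤ) + 2 * ((j : ℕ) : ℤ)) =
          A ^ ((m : ℤ) - 2 * ((((Fin.rev j : ℕ) - a : ℕ)) : ℤ)) * T := by
        rw [mul_assoc, ← Matrix.zpow_add hA,
          show (a:ℤ)-(b:ℤ) + (-(m : ℤ) + 2 * ((j : ℕ) : ℤ))
              = (m : ℤ) - 2 * ((((Fin.rev j : ℕ) - a : ℕ)) : ℤ) from by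
            simp only [Fin.val_rev]; omega]
        exact (Matrix.Commute.zpow_right hc _).eq
      have hsum : ∑ k, (T * A ^ ((a:ℤ)-(b:ℤ))) i k * Y k j
          = (((T * A ^ ((a:ℤ)-(b:ℤ))) * A ^ (-(m : ℤ) + 2 * ((j : ℕ) : ℤ))).mulVec v) i := by
        rw [← Matrix.mulVec_mulVec]
        simp only [hY, Matrix.of_apply, if_pos hj]
        rfl
      rw [hsum, hmat, if_pos hj, one_mul, Matrix.submatrix_apply, id_eq, Fin.revPerm_apply,
        hX, Matrix.of_apply, if_neg hrev]
    · have hrev : ((Fin.rev j : ℕ) < a) := by simp only [Fin.val_rev]; omega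
      have hmat : (T * A ^ ((a:ℤ)-(b:ℤ))) * (A ^ ((m : ℤ) - 2 * ((((j : ℕ) - b : ℕ)) : ℤ)) * T) =
          (-δ * A.det ^ 2) • A ^ (-(m : ℤ) + 2 * ((Fin.rev j : ℕ) : ℤ)) := by
        calc (T * A ^ ((a:ℤ)-(b:ℤ))) * (A ^ ((m : ℤ) - 2 * ((((j : ℕ) - b : ℕ)) : ℤ)) * T)
            = T * (A ^ ((a:ℤ)-(b:ℤ)) * A ^ ((m : ℤ) - 2 * ((((j : ℕ) - b : ℕ)) : ℤ))) * T := by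
              noncomm_ring
          _ = T * A ^ ((a:ℤ)-(b:ℤ) + ((m : ℤ) - 2 * ((((j : ℕ) - b : ℕ)) : ℤ))) * T := by
              rw [← Matrix.zpow_add hA]
          _ = A ^ ((a:ℤ)-(b:ℤ) + ((m : ℤ) - 2 * ((((j : ℕ) - b : ℕ)) : ℤ))) * T * T := by
              rw [(Matrix.Commute.zpow_right hc _).eq]
          _ = A ^ ((a:ℤ)-(b:ℤ) + ((m : ℤ) - 2 * ((((j : ℕ) - b : ℕ)) : ℤ))) * T ^ 2 := by
              rw [mul_assoc, ← pow_two]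
          _ = (-δ * A.det ^ 2) • A ^ ((a:ℤ)-(b:ℤ) + ((m : ℤ) - 2 * ((((j : ℕ) - b : ℕ)) : ℤ))) := by
              rw [hTT, mul_smul_comm, mul_one]
          _ = (-δ * A.det ^ 2) • A ^ (-(m : ℤ) + 2 * ((Fin.rev j : ℕ) : ℤ)) := by
              congr 1
              congr 1
              simp only [Fin.val_rev]; omega
      have hsum : ∑ k, (T * A ^ ((a:ℤ)-(b:ℤ))) i k * Y k j
          = (((T * A ^ ((a:ℤ)-(b:ℤ))) * (A ^ ((m : ℤ) - 2 * ((((j : ℕ) - b : ℕ)) : ℤ)) * T)).mulVec u) i := by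
        rw [← Matrix.mulVec_mulVec]
        simp only [hY, Matrix.of_apply, if_neg hj]
        rfl
      rw [hsum, hmat, if_neg hj, Matrix.submatrix_apply, id_eq, Fin.revPerm_apply,
        hX, Matrix.of_apply, if_pos hrev, Matrix.smul_mulVec, Pi.smul_apply, smul_eq_mul]
  have hdet := congrArg Matrix.det key
  rw [Matrix.det_mul, Matrix.det_mul_row, Matrix.det_permute'] at hdet
  have hprod : (∏ j : Fin (2*m+2), (if (j : ℕ) < b then (1:ℂ) else -δ * A.det ^ 2))
      = (-δ * A.det ^ 2) ^ a := by
    rw [Fin.prod_univ_eq_prod_range (fun k => if k < b then (1:ℂ) else -δ * A.det ^ 2) (2*m+2),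
      show Finset.range (2*m+2) = Finset.range (b+a) from by
        rw [show b + a = 2*m+2 from by omega], Finset.prod_range_add,
      Finset.prod_eq_one (fun i hi => if_pos (Finset.mem_range.mp hi)), one_mul,
      Finset.prod_congr rfl (fun i _ => if_neg (by omega)), Finset.prod_const,
      Finset.card_range]
  rw [hprod, sign_rev_even] at hdet
  rw [hdet]
  push_cast
  ring

/-- reverse-space-time reduction relations between the double Casoratians
`f`, `g`, `h` built from `A^(−m+2j)Φ(n,t)` and `A^(m−2j)T·Φ(−n,−t)`,
when `AT = TA` and `T² = −δ(det A)²I`. -/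
theorem reverse_space_time_casoratian_relations (m : ℕ) (hm : 1 ≤ m)
    (δ : ℂ) (hδ : δ = 1 ∨ δ = -1)
    (A T : Matrix (Fin (2 * m + 2)) (Fin (2 * m + 2)) ℂ)
    (hA : IsUnit A) (hTu : IsUnit T)
    (hAT : A * T = T * A)
    (hTT : T ^ 2 = (-δ * A.det ^ 2) • (1 : Matrix (Fin (2 * m + 2)) (Fin (2 * m + 2)) ℂ))
    (Φ : ℤ → ℝ → Fin (2 * m + 2) → ℂ)
    (f g h : ℤ → ℝ → ℂ)
    (hf : ∀ (n : ℤ) (t : ℝ), f n t =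
      Matrix.det (Matrix.of fun i j : Fin (2 * m + 2) =>
        if (j : ℕ) < m + 1 then
          ((A ^ (-(m : ℤ) + 2 * ((j : ℕ) : ℤ))).mulVec (Φ n t)) i
        else
          ((A ^ ((m : ℤ) - 2 * ((((j : ℕ) - (m + 1) : ℕ)) : ℤ)) * T).mulVec
            (Φ (-n) (-t))) i))
    (hg : ∀ (n : ℤ) (t : ℝ), g n t =
      Matrix.det (Matrix.of fun i j : Fin (2 * m + 2) =>
        if (j : ℕ) < m + 2 then
          ((A ^ (-(m : ℤ) + 2 * ((j : ℕ) : ℤ))).mulVec (Φ n t)) i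
        else
          ((A ^ ((m : ℤ) - 2 * ((((j : ℕ) - (m + 2) : ℕ)) : ℤ)) * T).mulVec
            (Φ (-n) (-t))) i))
    (hh : ∀ (n : ℤ) (t : ℝ), h n t =
      -Matrix.det (Matrix.of fun i j : Fin (2 * m + 2) =>
        if (j : ℕ) < m then
          ((A ^ (-(m : ℤ) + 2 * ((j : ℕ) : ℤ))).mulVec (Φ n t)) i
        else
          ((A ^ ((m : ℤ) - 2 * ((((j : ℕ) - m : ℕ)) : ℤ)) * T).mulVec
            (Φ (-n) (-t))) i)) :
    ∀ (n : ℤ) (t : ℝ),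
      f n t = (δ * (A.det ^ 2)⁻¹) ^ (m + 1) * T.det * f (-n) (-t) ∧
      h n t = δ ^ m * (A.det ^ (2 * (m + 1)))⁻¹ * T.det * g (-n) (-t) := by
  intro n t
  have hAd : IsUnit A.det := (Matrix.isUnit_iff_isUnit_det A).mp hA
  have hd : A.det ≠ 0 := hAd.ne_zero
  have hd2 : A.det ^ 2 ≠ 0 := pow_ne_zero _ hd
  have hδ2 : δ * δ = 1 := by rcases hδ with h1 | h1 <;> rw [h1] <;> norm_num
  have Hf' := hf (-n) (-t)
  have Hg' := hg (-n) (-t)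
  simp only [neg_neg] at Hf' Hg'
  constructor
  · -- f relation
    have K := aux_step m (m+1) (m+1) (by ring) δ A T hAd hAT hTT (Φ n t) (Φ (-n) (-t))
    rw [← hf n t, ← Hf'] at K
    rw [show ((m+1:ℕ):ℤ) - ((m+1:ℕ):ℤ) = 0 from sub_self _, zpow_zero, mul_one] at K
    -- K : T.det * f (-n) (-t) = (-δ * A.det^2)^(m+1) * (-1)^(m+1) * f n t
    have hC : (-δ * A.det ^ 2) ^ (m+1) * (-1:ℂ) ^ (m+1) = (δ * A.det ^ 2) ^ (m+1) := by
      rw [← mul_pow]; congr 1; ring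
    rw [hC] at K
    rw [mul_assoc, K, ← mul_assoc, ← mul_pow,
      show (δ * (A.det ^ 2)⁻¹) * (δ * A.det ^ 2) = (δ * δ) * ((A.det ^ 2)⁻¹ * A.det ^ 2) from by
        ring, inv_mul_cancel₀ hd2, hδ2, one_mul, one_pow, one_mul]
  · -- h relation
    have K := aux_step m m (m+2) (by ring) δ A T hAd hAT hTT (Φ n t) (Φ (-n) (-t))
    rw [← Hg'] at K
    have hBdet : (T * A ^ ((m:ℤ) - ((m+2:ℕ):ℤ))).det = T.det * (A.det ^ 2)⁻¹ := by
      rw [Matrix.det_mul]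
      congr 1
      rw [show (m:ℤ) - ((m+2:ℕ):ℤ) = -((2:ℕ):ℤ) from by push_cast; ring,
        Matrix.zpow_neg_natCast, Matrix.det_nonsing_inv, Ring.inverse_eq_inv, Matrix.det_pow]
    rw [hBdet] at K
    have hC : (-δ * A.det ^ 2) ^ m * (-1:ℂ) ^ (m + 1) = -((δ * A.det ^ 2) ^ m) := by
      have h1 : ((-1:ℂ)) ^ m * (-1:ℂ) ^ m = 1 := by rw [← mul_pow]; norm_num
      rw [show (-δ * A.det ^ 2 : ℂ) = (-1) * (δ * A.det ^ 2) from by ring, mul_pow, pow_succ]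
      calc (-1:ℂ) ^ m * (δ * A.det ^ 2) ^ m * ((-1:ℂ) ^ m * (-1))
          = ((-1:ℂ) ^ m * (-1:ℂ) ^ m) * (δ * A.det ^ 2) ^ m * (-1) := by ring
        _ = -((δ * A.det ^ 2) ^ m) := by rw [h1]; ring
    rw [hC] at K
    -- K : T.det * (A.det^2)⁻¹ * g (-n) (-t) = -((δ * A.det^2)^m) * det Xh
    rw [hh n t]
    have hKg : T.det * g (-n) (-t)
        = -((δ * A.det ^ 2) ^ m) * A.det ^ 2 *
          Matrix.det (Matrix.of fun i j : Fin (2 * m + 2) =>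
            if (j : ℕ) < m then
              ((A ^ (-(m : ℤ) + 2 * ((j : ℕ) : ℤ))).mulVec (Φ n t)) i
            else
              ((A ^ ((m : ℤ) - 2 * ((((j : ℕ) - m : ℕ)) : ℤ)) * T).mulVec
                (Φ (-n) (-t))) i) := by
      have := congrArg (fun z => A.det ^ 2 * z) K
      rw [show A.det ^ 2 * (T.det * (A.det ^ 2)⁻¹ * g (-n) (-t)) = T.det * g (-n) (-t) *
          (A.det ^ 2 * (A.det ^ 2)⁻¹) from by ring, mul_inv_cancel₀ hd2, mul_one] at this
      rw [this]; ring
    rw [mul_assoc, hKg]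
    rw [show δ ^ m * (A.det ^ (2 * (m + 1)))⁻¹ *
        (-((δ * A.det ^ 2) ^ m) * A.det ^ 2 * _) =
        -((δ ^ m * δ ^ m) * ((A.det ^ (2 * (m + 1)))⁻¹ * ((A.det ^ 2) ^ m * A.det ^ 2)) *
          Matrix.det (Matrix.of fun i j : Fin (2 * m + 2) =>
            if (j : ℕ) < m then
              ((A ^ (-(m : ℤ) + 2 * ((j : ℕ) : ℤ))).mulVec (Φ n t)) i
            else
              ((A ^ ((m : ℤ) - 2 * ((((j : ℕ) - m : ℕ)) : ℤ)) * T).mulVec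
                (Φ (-n) (-t))) i)) from by rw [mul_pow]; ring]
    rw [show (A.det ^ 2) ^ m * A.det ^ 2 = A.det ^ (2 * (m + 1)) from by
        rw [← pow_succ, ← pow_mul], inv_mul_cancel₀ (pow_ne_zero _ hd),
      show δ ^ m * δ ^ m = (δ * δ) ^ m from by rw [mul_pow], hδ2, one_pow, one_mul, one_mul]
end
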